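/- arXiv:1306.3438 — 2 statements merged into one kernel-verified Lean document; each statement's English description precedes it below -/
import Mathlib

section
/- Let u be twice continuously differentiable in x on an open subset of ℝ³×(0,∞) (or of ℝ³), and let P be a point where ∇_ℍu(P) ≠ 0. Then at P the following pointwise identity holds: |Hu|² − ⟨(Hu)²ν,ν⟩ = |∇_ℍu|²·[h² + (p + ⟨Hu v, ν⟩/|∇_ℍu|)²]. -/
noncomputable section
open MeasureTheory Real Filter Set

/-- Points of the half-space `ℝ³ × ℝ` (the last coordinate is `y`). -/
abbrev Pt : Type := (Fin 3 → ℝ) × ℝ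

/-- Partial derivative in the i-th horizontal direction. -/
def pdx (i : Fin 3) (u : Pt → ℝ) (p : Pt) : ℝ := fderiv ℝ u p (Pi.single i 1, 0)

/-- Partial derivative in the `y` direction. -/
def pdy (u : Pt → ℝ) (p : Pt) : ℝ := fderiv ℝ u p (0, 1)

/-- Heisenberg vector field `X = ∂₁ + 2x₂∂₃`. -/
def Xd (u : Pt → ℝ) (p : Pt) : ℝ := pdx 0 u p + 2 * p.1 1 * pdx 2 u p

/-- Heisenberg vector field `Y = ∂₂ − 2x₁∂₃`. -/
def Yd (u : Pt → ℝ) (p : Pt) : ℝ := pdx 1 u p - 2 * p.1 0 * pdx 2 u p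

/-- Heisenberg vector field `T = −4∂₃`. -/
def Td (u : Pt → ℝ) (p : Pt) : ℝ := -4 * pdx 2 u p

/-- `|∇_ℍ u|²`. -/
def normH2 (u : Pt → ℝ) (p : Pt) : ℝ := (Xd u p) ^ 2 + (Yd u p) ^ 2

/-- `|∇_ℍ u|`. -/
def nH (u : Pt → ℝ) (p : Pt) : ℝ := Real.sqrt (normH2 u p)

/-- `|∇⁺ u|² = (Xu)² + (Yu)² + (∂_y u)²`. -/
def gradSq (u : Pt → ℝ) (p : Pt) : ℝ := (Xd u p) ^ 2 + (Yd u p) ^ 2 + (pdy u p) ^ 2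

/-- `⟨∇⁺u, ∇⁺w⟩`. -/
def gradInner (u w : Pt → ℝ) (p : Pt) : ℝ :=
  Xd u p * Xd w p + Yd u p * Yd w p + pdy u p * pdy w p

/-- The open upper half-space `ℝ³ × (0,∞)`. -/
def Hplus : Set Pt := {p | 0 < p.2}

/-- Euclidean ball of radius `R` (centered at the origin) in `ℝ⁴ ≃ Pt`. -/
def eBall (R : ℝ) : Set Pt := {p | (p.1 0) ^ 2 + (p.1 1) ^ 2 + (p.1 2) ^ 2 + p.2 ^ 2 < R ^ 2}

/-- Admissible test function: bounded, locally Lipschitz on `ℝ³×[0,∞)`, vanishing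
outside some ball, with finite weighted energy. -/
def IsAdmissible (a : ℝ) (ξ : Pt → ℝ) : Prop :=
  (∃ M, ∀ p : Pt, 0 ≤ p.2 → |ξ p| ≤ M) ∧
  (∀ p : Pt, 0 ≤ p.2 → ∃ K : NNReal, ∃ t ∈ nhdsWithin p {q : Pt | 0 ≤ q.2},
    LipschitzOnWith K ξ t) ∧
  (∃ R > 0, (∀ p : Pt, 0 ≤ p.2 → p ∉ eBall R → ξ p = 0) ∧
    IntegrableOn (fun p => p.2 ^ a * gradSq ξ p) (eBall R ∩ Hplus) volume)

/-- Bounded weak solution of `div(y^a ∇⁺u)=0` in `ℝ³×(0,∞)`, `−y^a u_y = f(u)` on `ℝ³×{0}`. -/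
def IsWeakSolution (a : ℝ) (f : ℝ → ℝ) (u : Pt → ℝ) : Prop :=
  (∃ M, ∀ p : Pt, 0 ≤ p.2 → |u p| ≤ M) ∧
  ContinuousOn u {p : Pt | 0 ≤ p.2} ∧
  (∀ R > 0, IntegrableOn (fun p => p.2 ^ a * gradSq u p) (eBall R ∩ Hplus) volume) ∧
  (∀ ξ : Pt → ℝ, IsAdmissible a ξ →
    (∫ p in Hplus, p.2 ^ a * gradInner u ξ p)
      = ∫ x : Fin 3 → ℝ, f (u (x, 0)) * ξ (x, 0))

/-- Stability: nonnegativity of the second variation. -/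
def IsStable (a : ℝ) (f : ℝ → ℝ) (u : Pt → ℝ) : Prop :=
  ∀ ξ : Pt → ℝ, IsAdmissible a ξ →
    0 ≤ (∫ p in Hplus, p.2 ^ a * gradSq ξ p)
        - ∫ x : Fin 3 → ℝ, deriv f (u (x, 0)) * ξ (x, 0) ^ 2

/-- `f ∈ C^{1,γ}(ℝ)`. -/
def C1Holder (γ : ℝ) (f : ℝ → ℝ) : Prop :=
  Differentiable ℝ f ∧ ∃ C > 0, ∀ s t : ℝ, |deriv f s - deriv f t| ≤ C * |s - t| ^ γ

/-- `|∇_ℍ u| ∈ L^∞(closure(B_R⁺))` for every `R > 0`. -/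
def GradBound (u : Pt → ℝ) : Prop :=
  ∀ R > 0, ∃ M, ∀ p ∈ closure (eBall R ∩ Hplus), nH u p ≤ M

/-- First component of the intrinsic normal `ν = ∇_ℍu/|∇_ℍu|`. -/
def nu1 (u : Pt → ℝ) (p : Pt) : ℝ := Xd u p / nH u p

/-- Second component of the intrinsic normal. -/
def nu2 (u : Pt → ℝ) (p : Pt) : ℝ := Yd u p / nH u p

/-- First component of the intrinsic unit tangent `v = (Yu,−Xu)/|∇_ℍu|`. -/
def tv1 (u : Pt → ℝ) (p : Pt) : ℝ := Yd u p / nH u p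

/-- Second component of the intrinsic unit tangent. -/
def tv2 (u : Pt → ℝ) (p : Pt) : ℝ := -(Xd u p) / nH u p

/-- `|Hu|²`, the squared norm of the horizontal Hessian
`Hu = [[XXu, YXu],[XYu, YYu]]`. -/
def normHess2 (u : Pt → ℝ) (p : Pt) : ℝ :=
  (Xd (Xd u) p) ^ 2 + (Yd (Xd u) p) ^ 2 + (Xd (Yd u) p) ^ 2 + (Yd (Yd u) p) ^ 2

/-- `⟨(Hu)²ν,ν⟩ = |Huᵀν|²`, where `(Hu)² = Hu(Hu)ᵀ`. -/
def hessQ (u : Pt → ℝ) (p : Pt) : ℝ :=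
  (Xd (Xd u) p * nu1 u p + Xd (Yd u) p * nu2 u p) ^ 2
  + (Yd (Xd u) p * nu1 u p + Yd (Yd u) p * nu2 u p) ^ 2

/-- `⟨Hu v, ν⟩`. -/
def huvnu (u : Pt → ℝ) (p : Pt) : ℝ :=
  (Xd (Xd u) p * tv1 u p + Yd (Xd u) p * tv2 u p) * nu1 u p
  + (Xd (Yd u) p * tv1 u p + Yd (Yd u) p * tv2 u p) * nu2 u p

/-- Intrinsic mean curvature `h = X(Xu/|∇_ℍu|) + Y(Yu/|∇_ℍu|)`. -/
def curvh (u : Pt → ℝ) (p : Pt) : ℝ :=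
  Xd (fun q => Xd u q / nH u q) p + Yd (fun q => Yd u q / nH u q) p

/-- Imaginary curvature `p = −Tu/|∇_ℍu|`. -/
def curvp (u : Pt → ℝ) (p : Pt) : ℝ := - Td u p / nH u p

/-- `⟨Tν, v⟩ = T(ν₁)v₁ + T(ν₂)v₂`. -/
def tnuv (u : Pt → ℝ) (p : Pt) : ℝ :=
  Td (fun q => nu1 u q) p * tv1 u p + Td (fun q => nu2 u q) p * tv2 u p

/-- `𝓡⁺ = {(x,y) ∈ ℝ³×(0,∞) : ∇_ℍu(x,y) ≠ 0}`. -/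
def Rplus (u : Pt → ℝ) : Set Pt := {p | 0 < p.2 ∧ normH2 u p ≠ 0}

/-- The Heisenberg gauge norm `|x|_ℍ = ((x₁²+x₂²)² + x₃²)^{1/4}` on `ℝ³`. -/
def hnorm (x : Fin 3 → ℝ) : ℝ := (((x 0) ^ 2 + (x 1) ^ 2) ^ 2 + (x 2) ^ 2) ^ ((1 : ℝ) / 4)

/-- The gauge norm `|Z| = (|x|_ℍ² + y²)^{1/2}` on `ℝ³×(0,∞)`. -/
def gnorm (p : Pt) : ℝ := Real.sqrt ((hnorm p.1) ^ 2 + p.2 ^ 2)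

/-- Gauge ball `B(0,τ)` in the upper half-space. -/
def gBall (τ : ℝ) : Set Pt := {p | 0 < p.2 ∧ gnorm p < τ}

/-- Gauge semi-annulus `A_{r,R}`. -/
def gAnn (r R : ℝ) : Set Pt := {p | 0 < p.2 ∧ r ≤ gnorm p ∧ gnorm p ≤ R}

/-- The weighted energy `η(τ)`. -/
def eta (a : ℝ) (u : Pt → ℝ) (τ : ℝ) : ℝ :=
  ∫ p in gBall τ, 4 * p.2 ^ a * normH2 u p * ((p.1 0) ^ 2 + (p.1 1) ^ 2 + p.2 ^ 2)

/-!
In the orthonormal frame `(ν, v)` one has `|Hu|² = |(Hu)ᵀν|² + |(Hu)ᵀv|²`, and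
`|(Hu)ᵀv|² = ⟨Hu v, v⟩² + ⟨v, Hu ν⟩²`. Differentiating `ν = ∇_ℍu/|∇_ℍu|` gives
`⟨Hu v, v⟩ = |∇_ℍu| h`. The second term differs from `⟨Hu v, ν⟩` only through the
antisymmetric part of `Hu`, and `YXu − XYu = −Tu = |∇_ℍu| p` because `[X, Y] = T`
and the Euclidean Hessian of `u` is symmetric.
-/

def vecX (q : Pt) : Pt :=
  ((Pi.single 0 1 : Fin 3 → ℝ), 0) + (2 * q.1 1) • ((Pi.single 2 1 : Fin 3 → ℝ), 0)

def vecY (q : Pt) : Pt :=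
  ((Pi.single 1 1 : Fin 3 → ℝ), 0) - (2 * q.1 0) • ((Pi.single 2 1 : Fin 3 → ℝ), 0)

lemma Xd_eq_fderiv_apply (g : Pt → ℝ) (q : Pt) : Xd g q = fderiv ℝ g q (vecX q) := by
  simp only [Xd, pdx, vecX, map_add, map_smul, smul_eq_mul]

lemma Yd_eq_fderiv_apply (g : Pt → ℝ) (q : Pt) : Yd g q = fderiv ℝ g q (vecY q) := by
  simp only [Yd, pdx, vecY, map_sub, map_smul, smul_eq_mul]

def coordL (j : Fin 3) : Pt →L[ℝ] ℝ :=
  (ContinuousLinearMap.proj j).comp (ContinuousLinearMap.fst ℝ (Fin 3 → ℝ) ℝ)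

lemma hasFDerivAt_vecX (q : Pt) :
    HasFDerivAt vecX
      (((2 : ℝ) • coordL 1).smulRight ((Pi.single 2 1 : Fin 3 → ℝ), (0 : ℝ))) q := by
  have h := ((((2 : ℝ) • coordL 1).hasFDerivAt (x := q)).smul_const
    ((Pi.single 2 1 : Fin 3 → ℝ), (0 : ℝ))).const_add ((Pi.single 0 1 : Fin 3 → ℝ), (0 : ℝ))
  refine h.congr_of_eventuallyEq (.of_forall fun q => ?_)
  simp [vecX, coordL]

lemma hasFDerivAt_vecY (q : Pt) :
    HasFDerivAt vecY
      (-((2 : ℝ) • coordL 0).smulRight ((Pi.single 2 1 : Fin 3 → ℝ), (0 : ℝ))) q := by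
  have h := ((((2 : ℝ) • coordL 0).hasFDerivAt (x := q)).smul_const
    ((Pi.single 2 1 : Fin 3 → ℝ), (0 : ℝ))).const_sub ((Pi.single 1 1 : Fin 3 → ℝ), (0 : ℝ))
  refine h.congr_of_eventuallyEq (.of_forall fun q => ?_)
  simp [vecY, coordL]

section SecondDerivatives

variable {u : Pt → ℝ} {P : Pt}

lemma hasFDerivAt_Xd (hu : DifferentiableAt ℝ (fderiv ℝ u) P) :
    HasFDerivAt (Xd u) ((fderiv ℝ u P).comp
      (((2 : ℝ) • coordL 1).smulRight ((Pi.single 2 1 : Fin 3 → ℝ), (0 : ℝ)))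
      + (fderiv ℝ (fderiv ℝ u) P).flip (vecX P)) P := by
  rw [show Xd u = fun q => fderiv ℝ u q (vecX q) from funext (Xd_eq_fderiv_apply u)]
  exact hu.hasFDerivAt.clm_apply (hasFDerivAt_vecX P)

lemma hasFDerivAt_Yd (hu : DifferentiableAt ℝ (fderiv ℝ u) P) :
    HasFDerivAt (Yd u) ((fderiv ℝ u P).comp
      (-((2 : ℝ) • coordL 0).smulRight ((Pi.single 2 1 : Fin 3 → ℝ), (0 : ℝ)))
      + (fderiv ℝ (fderiv ℝ u) P).flip (vecY P)) P := by
  rw [show Yd u = fun q => fderiv ℝ u q (vecY q) from funext (Yd_eq_fderiv_apply u)]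
  exact hu.hasFDerivAt.clm_apply (hasFDerivAt_vecY P)

lemma fderiv_Xd_apply (hu : DifferentiableAt ℝ (fderiv ℝ u) P) (w : Pt) :
    fderiv ℝ (Xd u) P w = fderiv ℝ (fderiv ℝ u) P w (vecX P) + 2 * w.1 1 * pdx 2 u P := by
  simp only [(hasFDerivAt_Xd hu).fderiv, add_apply, ContinuousLinearMap.comp_apply,
    ContinuousLinearMap.flip_apply, ContinuousLinearMap.smulRight_apply, smul_apply, map_smul,
    smul_eq_mul, coordL, ContinuousLinearMap.proj_apply, ContinuousLinearMap.coe_fst', pdx]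
  ring

lemma fderiv_Yd_apply (hu : DifferentiableAt ℝ (fderiv ℝ u) P) (w : Pt) :
    fderiv ℝ (Yd u) P w = fderiv ℝ (fderiv ℝ u) P w (vecY P) - 2 * w.1 0 * pdx 2 u P := by
  simp only [(hasFDerivAt_Yd hu).fderiv, add_apply, ContinuousLinearMap.comp_apply,
    ContinuousLinearMap.flip_apply, ContinuousLinearMap.smulRight_apply, smul_apply, neg_apply,
    map_neg, map_smul, smul_eq_mul, coordL, ContinuousLinearMap.proj_apply, ContinuousLinearMap.coe_fst', pdx]
  ring

lemma Yd_Xd_sub_Xd_Yd (hu : ContDiffAt ℝ 2 u P) : Yd (Xd u) P - Xd (Yd u) P = -Td u P := by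
  have hd : DifferentiableAt ℝ (fderiv ℝ u) P :=
    (hu.fderiv_right le_rfl).differentiableAt one_ne_zero
  have hsymm : fderiv ℝ (fderiv ℝ u) P (vecY P) (vecX P)
      = fderiv ℝ (fderiv ℝ u) P (vecX P) (vecY P) :=
    hu.isSymmSndFDerivAt (by simp [minSmoothness_of_isRCLikeNormedField]) _ _
  have hX0 : (vecX P).1 0 = 1 := by simp [vecX]
  have hY1 : (vecY P).1 1 = 1 := by simp [vecY]
  rw [Yd_eq_fderiv_apply, Xd_eq_fderiv_apply, fderiv_Xd_apply hd, fderiv_Yd_apply hd, hsymm,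
    hX0, hY1, Td]
  ring

end SecondDerivatives

lemma fderiv_div_apply {E : Type*} [NormedAddCommGroup E] [NormedSpace ℝ E] {f g : E → ℝ}
    {x : E} (hf : DifferentiableAt ℝ f x) (hg : DifferentiableAt ℝ g x) (hgx : g x ≠ 0) (w : E) :
    fderiv ℝ (fun y => f y / g y) x w
      = (fderiv ℝ f x w * g x - f x * fderiv ℝ g x w) / g x ^ 2 := by
  have hinv : HasFDerivAt (fun y => (g y)⁻¹) ((-(g x ^ 2)⁻¹) • fderiv ℝ g x) x :=
    (hasDerivAt_inv hgx).comp_hasFDerivAt x hg.hasFDerivAt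
  have hdiv : HasFDerivAt (fun y => f y / g y)
      (f x • ((-(g x ^ 2)⁻¹) • fderiv ℝ g x) + (g x)⁻¹ • fderiv ℝ f x) x := by
    simpa only [div_eq_mul_inv, Pi.mul_def] using hf.hasFDerivAt.mul hinv
  rw [hdiv.fderiv]
  simp only [add_apply, smul_apply, smul_eq_mul]
  field_simp
  ring

lemma nH_sq (u : Pt → ℝ) (P : Pt) : nH u P ^ 2 = Xd u P ^ 2 + Yd u P ^ 2 :=
  Real.sq_sqrt (by unfold normH2; positivity)

section Curvature

variable {u : Pt → ℝ} {P : Pt}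

lemma hasFDerivAt_nH (hX : DifferentiableAt ℝ (Xd u) P) (hY : DifferentiableAt ℝ (Yd u) P)
    (hnd : normH2 u P ≠ 0) :
    HasFDerivAt (nH u)
      ((nH u P)⁻¹ • (Xd u P • fderiv ℝ (Xd u) P + Yd u P • fderiv ℝ (Yd u) P)) P := by
  have hsq : HasFDerivAt (nH u) _ P :=
    ((hX.hasFDerivAt.pow 2).add (hY.hasFDerivAt.pow 2)).sqrt hnd
  refine hsq.congr_fderiv (ContinuousLinearMap.ext fun w => ?_)
  simp only [Pi.add_apply, nsmul_eq_mul, smul_add, add_apply, smul_apply, smul_eq_mul, nH, normH2]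
  field_simp
  ring

lemma nH_ne_zero (hnd : normH2 u P ≠ 0) : nH u P ≠ 0 :=
  Real.sqrt_ne_zero'.mpr (lt_of_le_of_ne (by unfold normH2; positivity) (Ne.symm hnd))

lemma curvh_eq (hu : DifferentiableAt ℝ (fderiv ℝ u) P) (hnd : normH2 u P ≠ 0) :
    curvh u P = ((Xd (Xd u) P * tv1 u P + Yd (Xd u) P * tv2 u P) * tv1 u P
      + (Xd (Yd u) P * tv1 u P + Yd (Yd u) P * tv2 u P) * tv2 u P) / nH u P := by
  have hX := (hasFDerivAt_Xd hu).differentiableAt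
  have hY := (hasFDerivAt_Yd hu).differentiableAt
  have hN := hasFDerivAt_nH hX hY hnd
  have hn := nH_ne_zero hnd
  unfold curvh
  rw [Xd_eq_fderiv_apply, Yd_eq_fderiv_apply, fderiv_div_apply hX hN.differentiableAt hn,
    fderiv_div_apply hY hN.differentiableAt hn, hN.fderiv]
  simp only [smul_apply, add_apply, smul_eq_mul, ← Xd_eq_fderiv_apply, ← Yd_eq_fderiv_apply]
  unfold tv1 tv2
  field_simp
  linear_combination (Xd (Xd u) P + Yd (Yd u) P) * nH_sq u P

end Curvature

-- `(a, b; c, d)` plays `Hu`, `(s, t)` plays `ν` and `(t, -s)` plays `v`.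
lemma matrix_sq_sub_transpose_normal_sq (a b c d s t : ℝ) (h : s ^ 2 + t ^ 2 = 1) :
    a ^ 2 + b ^ 2 + c ^ 2 + d ^ 2 - ((a * s + c * t) ^ 2 + (b * s + d * t) ^ 2)
      = ((a * t + b * -s) * t + (c * t + d * -s) * -s) ^ 2
        + (b - c + ((a * t + b * -s) * s + (c * t + d * -s) * t)) ^ 2 := by
  linear_combination (-(a ^ 2 + d ^ 2 + 2 * b * c + (a * t - b * s) ^ 2 + (c * t - d * s) ^ 2)) * h

theorem hessian_curvature_identity_general
    (u : Pt → ℝ) (P : Pt)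
    (hreg : ∃ V : Set Pt, IsOpen V ∧ P ∈ V ∧ ContDiffOn ℝ 2 u V)
    (hnd : normH2 u P ≠ 0) :
    normHess2 u P - hessQ u P
      = normH2 u P * ((curvh u P) ^ 2 + (curvp u P + huvnu u P / nH u P) ^ 2) := by
  obtain ⟨V, hVo, hPV, huV⟩ := hreg
  have hu : ContDiffAt ℝ 2 u P := huV.contDiffAt (hVo.mem_nhds hPV)
  have hd : DifferentiableAt ℝ (fderiv ℝ u) P :=
    (hu.fderiv_right le_rfl).differentiableAt one_ne_zero
  have hn := nH_ne_zero hnd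
  have hν : nu1 u P ^ 2 + nu2 u P ^ 2 = 1 := by
    rw [nu1, nu2, div_pow, div_pow, ← add_div, ← nH_sq, div_self (pow_ne_zero 2 hn)]
  have hcurvp : curvp u P = (Yd (Xd u) P - Xd (Yd u) P) / nH u P := by
    rw [curvp, Yd_Xd_sub_Xd_Yd hu]
  have htv1 : tv1 u P = nu2 u P := rfl
  have htv2 : tv2 u P = -nu1 u P := neg_div _ _
  rw [curvh_eq hd hnd, hcurvp, normHess2, hessQ, huvnu, htv1, htv2,
    matrix_sq_sub_transpose_normal_sq _ _ _ _ _ _ hν, normH2, ← nH_sq]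
  field_simp

/-- **Lemma 4, first identity**: on the regular part of a level set,
`|Hu|² − ⟨(Hu)²ν,ν⟩ = |∇_ℍu|²(h² + (p + ⟨Hu v,ν⟩/|∇_ℍu|)²)`. -/
theorem hessian_curvature_identity
    (u : Pt → ℝ) (P : Pt) (hy : 0 < P.2)
    (hreg : ∃ V : Set Pt, IsOpen V ∧ P ∈ V ∧ ContDiffOn ℝ 2 u V)
    (hnd : normH2 u P ≠ 0) :
    normHess2 u P - hessQ u P
      = normH2 u P * ((curvh u P) ^ 2 + (curvp u P + huvnu u P / nH u P) ^ 2) :=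
  hessian_curvature_identity_general u P hreg hnd
end
end

section
/- Let a ∈ (−1,1) and let u ∈ C²(ℝ³×(0,∞)) be such that for every R > 0 the functions y^a|∇⁺u|², y^a|∇⁺(Xu)|², y^a|∇⁺(Yu)|², y^a|T(Xu)| and y^a|T(Yu)| are integrable on B_R⁺. Then for every smooth ξ: ℝ³×(0,∞) → ℝ vanishing outside a ball: (i) ∫_{ℝ³×(0,∞)} y^a⟨∇⁺u, ∇⁺(Xξ)⟩ = ∫_{ℝ³×(0,∞)} y^a(−⟨∇⁺(Xu), ∇⁺ξ⟩ + 2·T(Yu)·ξ), and (ii) ∫_{ℝ³×(0,∞)} y^a⟨∇⁺u, ∇⁺(Yξ)⟩ = ∫_{ℝ³×(0,∞)} y^a(−⟨∇⁺(Yu), ∇⁺ξ⟩ − 2·T(Xu)·ξ). -/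
noncomputable section
open MeasureTheory Real Filter Set

/-! ### Pointwise calculus lemmas -/

/-- Horizontal basis vector. -/
def vx (i : Fin 3) : Pt := ((Pi.single i 1 : Fin 3 → ℝ), (0:ℝ))

/-- Vertical basis vector. -/
def vy : Pt := ((0 : Fin 3 → ℝ), (1:ℝ))

lemma pdx_def (i : Fin 3) (f : Pt → ℝ) (p : Pt) : pdx i f p = fderiv ℝ f p (vx i) := rfl

lemma pdy_def (f : Pt → ℝ) (p : Pt) : pdy f p = fderiv ℝ f p vy := rfl

section rules
variable {f g : Pt → ℝ} {p : Pt} {i j : Fin 3} {c : ℝ}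

lemma pdx_add (hf : DifferentiableAt ℝ f p) (hg : DifferentiableAt ℝ g p) :
    pdx i (fun q => f q + g q) p = pdx i f p + pdx i g p := by
  simp [pdx_def, fderiv_fun_add hf hg]

lemma pdx_sub (hf : DifferentiableAt ℝ f p) (hg : DifferentiableAt ℝ g p) :
    pdx i (fun q => f q - g q) p = pdx i f p - pdx i g p := by
  simp [pdx_def, fderiv_fun_sub hf hg]

lemma pdx_mul (hf : DifferentiableAt ℝ f p) (hg : DifferentiableAt ℝ g p) :
    pdx i (fun q => f q * g q) p = pdx i f p * g p + f p * pdx i g p := by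
  simp [pdx_def, fderiv_fun_mul hf hg]; ring

lemma pdx_const_mul (hg : DifferentiableAt ℝ g p) :
    pdx i (fun q => c * g q) p = c * pdx i g p := by
  simp [pdx_def, fderiv_const_mul hg]

lemma pdy_add (hf : DifferentiableAt ℝ f p) (hg : DifferentiableAt ℝ g p) :
    pdy (fun q => f q + g q) p = pdy f p + pdy g p := by
  simp [pdy_def, fderiv_fun_add hf hg]

lemma pdy_mul (hf : DifferentiableAt ℝ f p) (hg : DifferentiableAt ℝ g p) :
    pdy (fun q => f q * g q) p = pdy f p * g p + f p * pdy g p := by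
  simp [pdy_def, fderiv_fun_mul hf hg]; ring

/-- The coordinate function `q ↦ q.1 j` as a continuous linear map. -/
def coordCLM (j : Fin 3) : Pt →L[ℝ] ℝ :=
  (ContinuousLinearMap.proj j).comp (ContinuousLinearMap.fst ℝ (Fin 3 → ℝ) ℝ)

lemma diff_coord : DifferentiableAt ℝ (fun q : Pt => q.1 j) p :=
  (coordCLM j).differentiableAt

lemma pdx_coord : pdx i (fun q : Pt => q.1 j) p = if j = i then 1 else 0 := by
  have : pdx i (fun q : Pt => q.1 j) p = fderiv ℝ (coordCLM j) p (vx i) := rfl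
  rw [this, (coordCLM j).fderiv]
  simp [coordCLM, vx, Pi.single_apply]

lemma pdy_coord : pdy (fun q : Pt => q.1 j) p = 0 := by
  have : pdy (fun q : Pt => q.1 j) p = fderiv ℝ (coordCLM j) p vy := rfl
  rw [this, (coordCLM j).fderiv]
  simp [coordCLM, vy]

end rules
lemma pdy_sub {f g : Pt → ℝ} {p : Pt} (hf : DifferentiableAt ℝ f p) (hg : DifferentiableAt ℝ g p) :
    pdy (fun q => f q - g q) p = pdy f p - pdy g p := by
  simp [pdy_def, fderiv_fun_sub hf hg]
section second
variable {f : Pt → ℝ} {p : Pt} {i j : Fin 3}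

lemma diff_fderiv (hf : ContDiffAt ℝ 2 f p) : DifferentiableAt ℝ (fderiv ℝ f) p := by
  have h : ContDiffAt ℝ 1 (fderiv ℝ f) p := hf.fderiv_right (by norm_num)
  exact h.differentiableAt (by norm_num)

lemma diff_pdx (hf : ContDiffAt ℝ 2 f p) : DifferentiableAt ℝ (pdx j f) p := by
  have : DifferentiableAt ℝ (fun q => fderiv ℝ f q (vx j)) p :=
    (diff_fderiv hf).clm_apply (differentiableAt_const _)
  exact this

lemma diff_pdy (hf : ContDiffAt ℝ 2 f p) : DifferentiableAt ℝ (pdy f) p := by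
  have : DifferentiableAt ℝ (fun q => fderiv ℝ f q vy) p :=
    (diff_fderiv hf).clm_apply (differentiableAt_const _)
  exact this

lemma fderiv_fderiv_apply (hf : ContDiffAt ℝ 2 f p) (b : Pt) :
    fderiv ℝ (fun q => fderiv ℝ f q b) p = (fderiv ℝ (fderiv ℝ f) p).flip b := by
  rw [fderiv_clm_apply (diff_fderiv hf) (differentiableAt_const b)]
  simp

lemma second_symm (hf : ContDiffAt ℝ 2 f p) (a b : Pt) :
    fderiv ℝ (fun q => fderiv ℝ f q b) p a = fderiv ℝ (fun q => fderiv ℝ f q a) p b := by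
  rw [fderiv_fderiv_apply hf a, fderiv_fderiv_apply hf b]
  exact (hf.isSymmSndFDerivAt (by simp)) a b

lemma pdx_pdx_symm (hf : ContDiffAt ℝ 2 f p) :
    pdx i (pdx j f) p = pdx j (pdx i f) p := second_symm hf _ _

lemma pdx_pdy_symm (hf : ContDiffAt ℝ 2 f p) :
    pdx i (pdy f) p = pdy (pdx i f) p := second_symm hf _ _

end second
section fields
variable {f g u ξ : Pt → ℝ} {p : Pt} {i : Fin 3}

lemma Xd_eq (f : Pt → ℝ) : Xd f = fun q => pdx 0 f q + (fun q : Pt => 2 * q.1 1) q * pdx 2 f q := rfl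
lemma Yd_eq (f : Pt → ℝ) : Yd f = fun q => pdx 1 f q - (fun q : Pt => 2 * q.1 0) q * pdx 2 f q := rfl
lemma Td_eq (f : Pt → ℝ) : Td f = fun q => -4 * pdx 2 f q := rfl

lemma diff_coef (j : Fin 3) : DifferentiableAt ℝ (fun q : Pt => 2 * q.1 j) p :=
  (diff_coord (j := j)).const_mul 2

lemma diff_Xd (hf : ContDiffAt ℝ 2 f p) : DifferentiableAt ℝ (Xd f) p := by
  rw [Xd_eq]
  exact (diff_pdx hf).add (((diff_coef 1).mul (diff_pdx hf)))

lemma diff_Yd (hf : ContDiffAt ℝ 2 f p) : DifferentiableAt ℝ (Yd f) p := by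
  rw [Yd_eq]
  exact (diff_pdx hf).sub (((diff_coef 0).mul (diff_pdx hf)))

lemma diff_Td (hf : ContDiffAt ℝ 2 f p) : DifferentiableAt ℝ (Td f) p := by
  rw [Td_eq]
  exact (diff_pdx hf).const_mul _

lemma pdx_coef {j : Fin 3} : pdx i (fun q : Pt => 2 * q.1 j) p = if j = i then 2 else 0 := by
  rw [pdx_const_mul diff_coord, pdx_coord]
  split <;> norm_num

lemma pdx_Xd (hf : ContDiffAt ℝ 2 f p) :
    pdx i (Xd f) p = pdx i (pdx 0 f) p + (if (1:Fin 3) = i then 2 else 0) * pdx 2 f p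
      + 2 * p.1 1 * pdx i (pdx 2 f) p := by
  rw [Xd_eq, pdx_add (diff_pdx hf) ((diff_coef 1).fun_mul (diff_pdx hf)),
    pdx_mul (diff_coef 1) (diff_pdx hf), pdx_coef]
  ring

lemma pdx_Yd (hf : ContDiffAt ℝ 2 f p) :
    pdx i (Yd f) p = pdx i (pdx 1 f) p - (if (0:Fin 3) = i then 2 else 0) * pdx 2 f p
      - 2 * p.1 0 * pdx i (pdx 2 f) p := by
  rw [Yd_eq, pdx_sub (diff_pdx hf) ((diff_coef 0).fun_mul (diff_pdx hf)),
    pdx_mul (diff_coef 0) (diff_pdx hf), pdx_coef]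
  ring

lemma pdx_Td (hf : ContDiffAt ℝ 2 f p) :
    pdx i (Td f) p = -4 * pdx i (pdx 2 f) p := by
  rw [Td_eq, pdx_const_mul (diff_pdx hf)]

lemma pdy_Xd (hf : ContDiffAt ℝ 2 f p) :
    pdy (Xd f) p = pdy (pdx 0 f) p + 2 * p.1 1 * pdy (pdx 2 f) p := by
  rw [Xd_eq, pdy_add (diff_pdx hf) ((diff_coef 1).fun_mul (diff_pdx hf)),
    pdy_mul (diff_coef 1) (diff_pdx hf)]
  have : pdy (fun q : Pt => 2 * q.1 1) p = 0 := by
    have := pdy_coord (j := (1:Fin 3)) (p := p)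
    rw [show (fun q : Pt => 2 * q.1 1) = (fun q : Pt => 2 * (fun q : Pt => q.1 1) q) from rfl]
    simp [pdy_def] at this ⊢
    rw [fderiv_const_mul diff_coord]
    simp [this]
  rw [this]; ring

/-- `[X,Y] = T` (pointwise, for `C²` functions). -/
lemma comm_XY (hf : ContDiffAt ℝ 2 f p) :
    Xd (Yd f) p = Yd (Xd f) p + Td f p := by
  have h01 : pdx 0 (pdx 1 f) p = pdx 1 (pdx 0 f) p := pdx_pdx_symm hf
  have h02 : pdx 0 (pdx 2 f) p = pdx 2 (pdx 0 f) p := pdx_pdx_symm hf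
  have h12 : pdx 1 (pdx 2 f) p = pdx 2 (pdx 1 f) p := pdx_pdx_symm hf
  show pdx 0 (Yd f) p + 2 * p.1 1 * pdx 2 (Yd f) p
      = (pdx 1 (Xd f) p - 2 * p.1 0 * pdx 2 (Xd f) p) + Td f p
  rw [pdx_Yd hf, pdx_Yd hf, pdx_Xd hf, pdx_Xd hf, Td_eq]
  simp only [show ((0:Fin 3) = (0:Fin 3)) = True by simp, show ((0:Fin 3) = (2:Fin 3)) = False by simp,
    show ((1:Fin 3) = (1:Fin 3)) = True by simp, show ((1:Fin 3) = (2:Fin 3)) = False by simp,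
    if_true, if_false]
  rw [h01, h02, h12]
  ring

/-- `[X,∂_y] = 0`. -/
lemma comm_Xy (hf : ContDiffAt ℝ 2 f p) :
    Xd (pdy f) p = pdy (Xd f) p := by
  show pdx 0 (pdy f) p + 2 * p.1 1 * pdx 2 (pdy f) p = _
  rw [pdy_Xd hf, pdx_pdy_symm hf, pdx_pdy_symm hf]

/-- `[Y,∂_y] = 0`. -/
lemma comm_Yy (hf : ContDiffAt ℝ 2 f p) :
    Yd (pdy f) p = pdy (Yd f) p := by
  have hyd : pdy (Yd f) p = pdy (pdx 1 f) p - 2 * p.1 0 * pdy (pdx 2 f) p := by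
    rw [Yd_eq, pdy_sub (diff_pdx hf) ((diff_coef 0).fun_mul (diff_pdx hf)),
      pdy_mul (diff_coef 0) (diff_pdx hf)]
    have : pdy (fun q : Pt => 2 * q.1 0) p = 0 := by
      have h0 := pdy_coord (j := (0:Fin 3)) (p := p)
      simp [pdy_def] at h0 ⊢
      rw [show (fun q : Pt => 2 * q.1 0) = (fun q : Pt => 2 * (fun q : Pt => q.1 0) q) from rfl,
        fderiv_const_mul diff_coord]
      simp [h0]
    rw [this]; ring
  show pdx 1 (pdy f) p - 2 * p.1 0 * pdx 2 (pdy f) p = _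
  rw [hyd, pdx_pdy_symm hf, pdx_pdy_symm hf]

/-- `[X,T] = 0`. -/
lemma comm_XT (hf : ContDiffAt ℝ 2 f p) :
    Xd (Td f) p = Td (Xd f) p := by
  show pdx 0 (Td f) p + 2 * p.1 1 * pdx 2 (Td f) p = -4 * pdx 2 (Xd f) p
  rw [pdx_Td hf, pdx_Td hf, pdx_Xd hf]
  simp only [show ((1:Fin 3) = (2:Fin 3)) = False by simp, if_false]
  rw [pdx_pdx_symm hf (i := 0) (j := 2)]
  ring

/-- `[Y,T] = 0`. -/
lemma comm_YT (hf : ContDiffAt ℝ 2 f p) :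
    Yd (Td f) p = Td (Yd f) p := by
  show pdx 1 (Td f) p - 2 * p.1 0 * pdx 2 (Td f) p = -4 * pdx 2 (Yd f) p
  rw [pdx_Td hf, pdx_Td hf, pdx_Yd hf]
  simp only [show ((0:Fin 3) = (2:Fin 3)) = False by simp, if_false]
  rw [pdx_pdx_symm hf (i := 1) (j := 2)]
  ring

lemma Xd_add (hf : DifferentiableAt ℝ f p) (hg : DifferentiableAt ℝ g p) :
    Xd (fun q => f q + g q) p = Xd f p + Xd g p := by
  show pdx 0 _ p + 2 * p.1 1 * pdx 2 _ p = _
  rw [pdx_add hf hg, pdx_add hf hg]; show _ = (pdx 0 f p + 2*p.1 1*pdx 2 f p) + (pdx 0 g p + 2*p.1 1*pdx 2 g p); ring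

lemma Xd_mul (hf : DifferentiableAt ℝ f p) (hg : DifferentiableAt ℝ g p) :
    Xd (fun q => f q * g q) p = Xd f p * g p + f p * Xd g p := by
  show pdx 0 _ p + 2 * p.1 1 * pdx 2 _ p = _
  rw [pdx_mul hf hg, pdx_mul hf hg]
  show _ = (pdx 0 f p + 2*p.1 1*pdx 2 f p) * g p + f p * (pdx 0 g p + 2*p.1 1*pdx 2 g p); ring

lemma Yd_add (hf : DifferentiableAt ℝ f p) (hg : DifferentiableAt ℝ g p) :
    Yd (fun q => f q + g q) p = Yd f p + Yd g p := by
  show pdx 1 _ p - 2 * p.1 0 * pdx 2 _ p = _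
  rw [pdx_add hf hg, pdx_add hf hg]; show _ = (pdx 1 f p - 2*p.1 0*pdx 2 f p) + (pdx 1 g p - 2*p.1 0*pdx 2 g p); ring

lemma Yd_mul (hf : DifferentiableAt ℝ f p) (hg : DifferentiableAt ℝ g p) :
    Yd (fun q => f q * g q) p = Yd f p * g p + f p * Yd g p := by
  show pdx 1 _ p - 2 * p.1 0 * pdx 2 _ p = _
  rw [pdx_mul hf hg, pdx_mul hf hg]
  show _ = (pdx 1 f p - 2*p.1 0*pdx 2 f p) * g p + f p * (pdx 1 g p - 2*p.1 0*pdx 2 g p); ring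

lemma Td_mul (hf : DifferentiableAt ℝ f p) (hg : DifferentiableAt ℝ g p) :
    Td (fun q => f q * g q) p = Td f p * g p + f p * Td g p := by
  show -4 * pdx 2 _ p = _
  rw [pdx_mul hf hg]
  show _ = (-4 * pdx 2 f p) * g p + f p * (-4 * pdx 2 g p); ring

end fields
section identities
variable {u ξ : Pt → ℝ} {p : Pt}

lemma gradInner_eq (u w : Pt → ℝ) :
    (fun q => gradInner u w q)
      = fun q => ((fun q => Xd u q * Xd w q) q + (fun q => Yd u q * Yd w q) q)
          + (fun q => pdy u q * pdy w q) q := rfl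

/-- Expansion of `X(⟨∇⁺u,∇⁺ξ⟩)`. -/
lemma Xd_gradInner (hu : ContDiffAt ℝ 2 u p) (hξ : ContDiffAt ℝ 2 ξ p) :
    Xd (fun q => gradInner u ξ q) p
      = (Xd (Xd u) p * Xd ξ p + Xd u p * Xd (Xd ξ) p)
        + (Xd (Yd u) p * Yd ξ p + Yd u p * Xd (Yd ξ) p)
        + (Xd (pdy u) p * pdy ξ p + pdy u p * Xd (pdy ξ) p) := by
  rw [gradInner_eq,
    Xd_add (((diff_Xd hu).fun_mul (diff_Xd hξ)).fun_add ((diff_Yd hu).fun_mul (diff_Yd hξ)))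
      ((diff_pdy hu).fun_mul (diff_pdy hξ)),
    Xd_add ((diff_Xd hu).fun_mul (diff_Xd hξ)) ((diff_Yd hu).fun_mul (diff_Yd hξ)),
    Xd_mul (diff_Xd hu) (diff_Xd hξ), Xd_mul (diff_Yd hu) (diff_Yd hξ),
    Xd_mul (diff_pdy hu) (diff_pdy hξ)]

/-- Expansion of `Y(⟨∇⁺u,∇⁺ξ⟩)`. -/
lemma Yd_gradInner (hu : ContDiffAt ℝ 2 u p) (hξ : ContDiffAt ℝ 2 ξ p) :
    Yd (fun q => gradInner u ξ q) p
      = (Yd (Xd u) p * Xd ξ p + Xd u p * Yd (Xd ξ) p)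
        + (Yd (Yd u) p * Yd ξ p + Yd u p * Yd (Yd ξ) p)
        + (Yd (pdy u) p * pdy ξ p + pdy u p * Yd (pdy ξ) p) := by
  rw [gradInner_eq,
    Yd_add (((diff_Xd hu).fun_mul (diff_Xd hξ)).fun_add ((diff_Yd hu).fun_mul (diff_Yd hξ)))
      ((diff_pdy hu).fun_mul (diff_pdy hξ)),
    Yd_add ((diff_Xd hu).fun_mul (diff_Xd hξ)) ((diff_Yd hu).fun_mul (diff_Yd hξ)),
    Yd_mul (diff_Xd hu) (diff_Xd hξ), Yd_mul (diff_Yd hu) (diff_Yd hξ),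
    Yd_mul (diff_pdy hu) (diff_pdy hξ)]

/-- Grand identity for the `X` direction. -/
lemma grand_X (hu : ContDiffAt ℝ 2 u p) (hξ : ContDiffAt ℝ 2 ξ p) :
    gradInner u (Xd ξ) p + gradInner (Xd u) ξ p - 2 * Td (Yd u) p * ξ p
      = Xd (fun q => gradInner u ξ q) p - Yd (fun q => Td u q * ξ q) p
        - Td (fun q => Yd u q * ξ q) p := by
  have hdξ : DifferentiableAt ℝ ξ p := hξ.differentiableAt (by norm_num)
  rw [Xd_gradInner hu hξ, Yd_mul (diff_Td hu) hdξ, Td_mul (diff_Yd hu) hdξ,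
    comm_YT hu, comm_XY hu, comm_XY hξ, comm_Xy hu, comm_Xy hξ]
  simp only [gradInner]
  ring

/-- Grand identity for the `Y` direction. -/
lemma grand_Y (hu : ContDiffAt ℝ 2 u p) (hξ : ContDiffAt ℝ 2 ξ p) :
    gradInner u (Yd ξ) p + gradInner (Yd u) ξ p + 2 * Td (Xd u) p * ξ p
      = Yd (fun q => gradInner u ξ q) p + Xd (fun q => Td u q * ξ q) p
        + Td (fun q => Xd u q * ξ q) p := by
  have hdξ : DifferentiableAt ℝ ξ p := hξ.differentiableAt (by norm_num)
  rw [Yd_gradInner hu hξ, Xd_mul (diff_Td hu) hdξ, Td_mul (diff_Xd hu) hdξ,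
    comm_XT hu, comm_Yy hu, comm_Yy hξ]
  simp only [gradInner]
  have h1 : Xd (Yd ξ) p = Yd (Xd ξ) p + Td ξ p := comm_XY hξ
  have h2 : Xd (Yd u) p = Yd (Xd u) p + Td u p := comm_XY hu
  rw [h1, h2]
  ring
/-! ### Measure-preserving shear maps -/

/-- The shear `(x₁,x₂,x₃) ↦ (x₁,x₂,x₃ + k x₁ x₂)`. -/
def shear (k : ℝ) (x : Fin 3 → ℝ) : Fin 3 → ℝ := Function.update x 2 (x 2 + k * x 0 * x 1)

lemma shear_apply0 (k : ℝ) (x : Fin 3 → ℝ) : shear k x 0 = x 0 := by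
  simp [shear, Function.update]
lemma shear_apply1 (k : ℝ) (x : Fin 3 → ℝ) : shear k x 1 = x 1 := by
  simp [shear, Function.update]
lemma shear_apply2 (k : ℝ) (x : Fin 3 → ℝ) : shear k x 2 = x 2 + k * x 0 * x 1 := by
  simp [shear, Function.update]

lemma mp_tau (k : ℝ) :
    MeasurePreserving (fun q : ℝ × (Fin 2 → ℝ) => (q.1 + k * q.2 0 * q.2 1, q.2))
      volume volume := by
  have hσ : MeasurePreserving
      (fun q : (Fin 2 → ℝ) × ℝ => (q.1, q.2 + k * q.1 0 * q.1 1)) volume volume :=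
    (MeasurePreserving.id volume).skew_product
      (by fun_prop)
      (Filter.Eventually.of_forall fun (w : Fin 2 → ℝ) =>
        (measurePreserving_add_right volume (k * w 0 * w 1)).map_eq)
  have hswap1 : MeasurePreserving (Prod.swap : ℝ × (Fin 2 → ℝ) → (Fin 2 → ℝ) × ℝ)
      volume volume := Measure.measurePreserving_swap
  have hswap2 : MeasurePreserving (Prod.swap : (Fin 2 → ℝ) × ℝ → ℝ × (Fin 2 → ℝ))
      volume volume := Measure.measurePreserving_swap
  have := (hswap2.comp hσ).comp hswap1
  convert this using 1
  rfl

lemma mp_shear (k : ℝ) : MeasurePreserving (shear k) volume volume := by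
  set e := MeasurableEquiv.piFinSuccAbove (fun _ : Fin 3 => ℝ) 2 with he_def
  have he : MeasurePreserving e volume volume :=
    volume_preserving_piFinSuccAbove (fun _ : Fin 3 => ℝ) 2
  have key : shear k = e.symm ∘ (fun q : ℝ × (Fin 2 → ℝ) =>
      (q.1 + k * q.2 0 * q.2 1, q.2)) ∘ e := by
    funext x
    apply e.injective
    have h1 : ∀ z, e z = (z 2, fun j => z ((2:Fin 3).succAbove j)) := fun z => rfl
    simp only [Function.comp_apply, MeasurableEquiv.apply_symm_apply]
    rw [h1, h1]
    have h0 : (2:Fin 3).succAbove 0 = 0 := by decide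
    have h2 : (2:Fin 3).succAbove 1 = 1 := by decide
    refine Prod.ext ?_ ?_
    · simp only [shear_apply2, h0, h2]
    · funext j
      have hne : (2:Fin 3).succAbove j ≠ 2 := Fin.succAbove_ne _ j
      simp [shear, Function.update_of_ne hne]
  rw [key]
  exact (he.symm e).comp ((mp_tau k).comp he)

/-- The composed measure-preserving flow parametrization. -/
lemma mp_lineMap (i : Fin 3) (k : ℝ) :
    MeasurePreserving (fun q : ((Fin 2 → ℝ) × ℝ) × ℝ =>
      ((shear k (Fin.insertNth (α := fun _ => ℝ) i q.2 q.1.1), q.1.2) : Pt)) volume volume := by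
  have m1 : MeasurePreserving
      (Prod.swap : ((Fin 2 → ℝ) × ℝ) × ℝ → ℝ × ((Fin 2 → ℝ) × ℝ)) volume volume :=
    Measure.measurePreserving_swap
  have m2 : MeasurePreserving
      (MeasurableEquiv.prodAssoc.symm : ℝ × ((Fin 2 → ℝ) × ℝ) → (ℝ × (Fin 2 → ℝ)) × ℝ)
      volume volume :=
    (volume_preserving_prodAssoc (α₁ := ℝ) (β₁ := Fin 2 → ℝ) (γ₁ := ℝ)).symm _
  have m3 : MeasurePreserving
      (Prod.map (fun q : ℝ × (Fin 2 → ℝ) => Fin.insertNth (α := fun _ => ℝ) i q.1 q.2) (id : ℝ → ℝ))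
      volume volume := by
    have h3 : MeasurePreserving
        ((MeasurableEquiv.piFinSuccAbove (fun _ : Fin 3 => ℝ) i).symm) volume volume :=
      (volume_preserving_piFinSuccAbove (fun _ : Fin 3 => ℝ) i).symm _
    have h4 : ⇑(MeasurableEquiv.piFinSuccAbove (fun _ : Fin 3 => ℝ) i).symm
        = fun q : ℝ × (Fin 2 → ℝ) => Fin.insertNth (α := fun _ => ℝ) i q.1 q.2 := by
      rw [MeasurableEquiv.piFinSuccAbove_symm_apply]
      funext q; exact funext fun j => Fin.insertNthEquiv_apply _ _ _ _
    rw [h4] at h3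
    exact h3.prod (MeasurePreserving.id volume)
  have m4 : MeasurePreserving (Prod.map (shear k) (id : ℝ → ℝ)) volume volume :=
    (mp_shear k).prod (MeasurePreserving.id volume)
  have := ((m4.comp m3).comp m2).comp m1
  convert this using 1
  rfl
/-! ### Generic integration by parts along a measure-preserving flow -/

lemma isOpen_Hplus : IsOpen Hplus := isOpen_lt continuous_const continuous_snd

lemma measurableSet_Hplus : MeasurableSet Hplus := isOpen_Hplus.measurableSet

/-- If the integral of `g` along a.e. flow line vanishes, the integral vanishes. -/
lemma integral_zero_of_line (ℓ : (Fin 2 → ℝ) → ℝ → (Fin 3 → ℝ))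
    (hMP : MeasurePreserving (fun q : ((Fin 2 → ℝ) × ℝ) × ℝ =>
      ((ℓ q.1.1 q.2, q.1.2) : Pt)) volume volume)
    (g : Pt → ℝ) (hg : IntegrableOn g Hplus volume)
    (h0 : ∀ w : Fin 2 → ℝ, ∀ y : ℝ, 0 < y → (∫ t : ℝ, g (ℓ w t, y)) = 0) :
    ∫ p in Hplus, g p = 0 := by
  set Ψ := fun q : ((Fin 2 → ℝ) × ℝ) × ℝ => ((ℓ q.1.1 q.2, q.1.2) : Pt) with hΨ
  set G := Hplus.indicator g with hG
  have hGint : Integrable G volume := (integrable_indicator_iff measurableSet_Hplus).2 hg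
  have h1 : ∫ p in Hplus, g p = ∫ p, G p := (integral_indicator measurableSet_Hplus).symm
  have h2 : ∫ p, G p = ∫ q, G (Ψ q) := by
    rw [← hMP.map_eq]
    exact integral_map hMP.measurable.aemeasurable (hMP.map_eq ▸ hGint.aestronglyMeasurable)
  have h3 : Integrable (fun q => G (Ψ q)) volume := by
    have := (integrable_map_measure (hMP.map_eq ▸ hGint.aestronglyMeasurable)
      hMP.measurable.aemeasurable).1 (hMP.map_eq ▸ hGint)
    exact this
  rw [h1, h2]
  have h4 : ∫ q, G (Ψ q) = ∫ wy : (Fin 2 → ℝ) × ℝ, ∫ t : ℝ, G (Ψ (wy, t)) := by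
    rw [Measure.volume_eq_prod] at h3 ⊢
    exact MeasureTheory.integral_prod _ h3
  rw [h4]
  have h5 : ∀ wy : (Fin 2 → ℝ) × ℝ, (∫ t : ℝ, G (Ψ (wy, t))) = 0 := by
    rintro ⟨w, y⟩
    by_cases hy : 0 < y
    · have : ∀ t, G (Ψ ((w, y), t)) = g (ℓ w t, y) := fun t =>
        Set.indicator_of_mem (by exact hy) g
      simp only [this]
      exact h0 w y hy
    · have : ∀ t, G (Ψ ((w, y), t)) = 0 := fun t =>
        Set.indicator_of_notMem (by exact hy) g
      simp only [this, integral_zero]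
  simp only [h5, integral_zero]

/-- Generic integration-by-parts: the weighted integral of a directional derivative of a
compactly supported function along a measure-preserving flow vanishes. -/
lemma ibp_gen (a : ℝ) (F g : Pt → ℝ) (hF : ContDiffOn ℝ 1 F Hplus)
    (R' : ℝ) (hR' : 0 < R') (hFsupp : ∀ p : Pt, p ∉ eBall R' → F p = 0)
    (ℓ : (Fin 2 → ℝ) → ℝ → (Fin 3 → ℝ))
    (hMP : MeasurePreserving (fun q : ((Fin 2 → ℝ) × ℝ) × ℝ =>
      ((ℓ q.1.1 q.2, q.1.2) : Pt)) volume volume)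
    (dv : (Fin 2 → ℝ) → Pt) (vf : Pt → Pt) (iesc : Fin 3)
    (hline : ∀ w y t, ((ℓ w t, y) : Pt) = ((ℓ w 0, y) : Pt) + t • dv w)
    (hco : ∀ w t, (ℓ w t) iesc = t)
    (hvf : ∀ (w : Fin 2 → ℝ) (t y : ℝ), vf ((ℓ w t, y) : Pt) = dv w)
    (hgdef : ∀ p ∈ Hplus, g p = p.2 ^ a * fderiv ℝ F p (vf p))
    (hg : IntegrableOn g Hplus volume) :
    ∫ p in Hplus, g p = 0 := by
  apply integral_zero_of_line ℓ hMP g hg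
  intro w y hy
  set γ : ℝ → Pt := fun t => ((ℓ w t, y) : Pt) with hγ
  have hγmem : ∀ t, γ t ∈ Hplus := fun t => hy
  have hγd : ∀ t, HasDerivAt γ (dv w) t := by
    intro t
    have : HasDerivAt (fun s : ℝ => ((ℓ w 0, y) : Pt) + s • dv w) (dv w) t := by
      simpa using ((hasDerivAt_id t).smul_const (dv w)).const_add ((ℓ w 0, y) : Pt)
    convert this using 1
    funext s; exact hline w y s
  have hFdiff : ∀ t, DifferentiableAt ℝ F (γ t) :=
    fun t => (hF.contDiffAt (isOpen_Hplus.mem_nhds (hγmem t))).differentiableAt one_ne_zero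
  -- the fiber integrand
  have hfib : ∀ t, g (γ t) = y ^ a * fderiv ℝ F (γ t) (dv w) := by
    intro t
    rw [hgdef (γ t) (hγmem t)]
    simp only [hγ, hvf w t y]
  -- vanishing far out
  have hvanish : ∀ t : ℝ, R' < |t| → fderiv ℝ F (γ t) = 0 ∧ F (γ t) = 0 := by
    intro t ht
    have hopen : IsOpen {q : Pt | R' ^ 2 < (q.1 iesc) ^ 2} := by
      have : Continuous fun q : Pt => (q.1 iesc) ^ 2 := by fun_prop
      exact isOpen_lt continuous_const this
    have hsub : ∀ q : Pt, R' ^ 2 < (q.1 iesc) ^ 2 → F q = 0 := by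
      intro q hq
      apply hFsupp
      intro hmem
      simp only [eBall, Set.mem_setOf_eq] at hmem
      have h0 : (q.1 iesc) ^ 2 ≤ (q.1 0) ^ 2 + (q.1 1) ^ 2 + (q.1 2) ^ 2 + q.2 ^ 2 := by
        have hd : iesc = 0 ∨ iesc = 1 ∨ iesc = 2 := by fin_cases iesc <;> simp
        rcases hd with h | h | h <;> rw [h] <;>
          nlinarith [sq_nonneg (q.1 0), sq_nonneg (q.1 1), sq_nonneg (q.1 2), sq_nonneg q.2]
      nlinarith
    have hmem : γ t ∈ {q : Pt | R' ^ 2 < (q.1 iesc) ^ 2} := by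
      simp only [Set.mem_setOf_eq, hγ, hco w t]
      have : R' < |t| := ht
      nlinarith [abs_nonneg t, sq_abs t]
    constructor
    · have hev : F =ᶠ[nhds (γ t)] (fun _ => (0:ℝ)) :=
        Filter.eventually_of_mem (hopen.mem_nhds hmem) (fun q hq => hsub q hq)
      rw [hev.fderiv_eq, fderiv_fun_const]
      rfl
    · exact hsub _ hmem
  set M := R' + 1 with hM
  have hMpos : 0 < M := by linarith
  -- continuity of the fiber integrand
  have hγcont : Continuous γ := by
    have : Continuous (fun t : ℝ => ((ℓ w 0, y) : Pt) + t • dv w) := by fun_prop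
    convert this using 1
    funext s; exact hline w y s
  have hcont : Continuous fun t => y ^ a * fderiv ℝ F (γ t) (dv w) := by
    have h1 : ContinuousOn (fderiv ℝ F) Hplus :=
      hF.continuousOn_fderiv_of_isOpen isOpen_Hplus le_rfl
    have h2 : Continuous fun t => fderiv ℝ F (γ t) :=
      h1.comp_continuous hγcont hγmem
    exact continuous_const.mul (h2.clm_apply continuous_const)
  -- restrict to an interval
  have hzero : ∀ t : ℝ, t ∉ Set.Ioc (-M) M → g (γ t) = 0 := by
    intro t ht
    have habs : R' < |t| := by
      simp only [Set.mem_Ioc, not_and_or, not_lt, not_le] at ht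
      rcases ht with h | h
      · rw [abs_of_nonpos (by linarith)]; linarith
      · rw [abs_of_pos (by linarith)]; linarith
    rw [hfib t, (hvanish t habs).1]
    simp
  have hres : (∫ t : ℝ, g (γ t)) = ∫ t in Set.Ioc (-M) M, g (γ t) :=
    (setIntegral_eq_integral_of_forall_compl_eq_zero hzero).symm
  have hΦ : ∀ t : ℝ, HasDerivAt (fun s => y ^ a * F (γ s)) (g (γ t)) t := by
    intro t
    rw [hfib t]
    exact ((hFdiff t).hasFDerivAt.comp_hasDerivAt t (hγd t)).const_mul _
  have hii : IntervalIntegrable (fun t => g (γ t)) volume (-M) M := by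
    have : (fun t => g (γ t)) = fun t => y ^ a * fderiv ℝ F (γ t) (dv w) := funext hfib
    rw [this]
    exact hcont.intervalIntegrable _ _
  have hftc : (∫ t in (-M)..M, g (γ t)) = y ^ a * F (γ M) - y ^ a * F (γ (-M)) :=
    intervalIntegral.integral_eq_sub_of_hasDerivAt (fun t _ => hΦ t) hii
  have hFM : F (γ M) = 0 := (hvanish M (by rw [abs_of_pos hMpos]; linarith)).2
  have hFM' : F (γ (-M)) = 0 := by
    refine (hvanish (-M) ?_).2
    rw [abs_of_neg (by linarith)]; linarith
  show (∫ t : ℝ, g (γ t)) = 0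
  rw [hres, ← intervalIntegral.integral_of_le (by linarith : -M ≤ M), hftc, hFM, hFM']
  ring
/-! ### IBP along X, Y, T -/

section coords
variable (t : ℝ) (w : Fin 2 → ℝ)

lemma insA (i : Fin 3) : Fin.insertNth (α := fun _ => ℝ) i t w i = t :=
  Fin.insertNth_apply_same (α := fun _ => ℝ) i t w

lemma ins01 : Fin.insertNth (α := fun _ => ℝ) 0 t w 1 = w 0 := by
  simp [Fin.insertNth, Fin.succAboveCases] <;> rfl
lemma ins02 : Fin.insertNth (α := fun _ => ℝ) 0 t w 2 = w 1 := by
  simp [Fin.insertNth, Fin.succAboveCases] <;> rfl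
lemma ins10 : Fin.insertNth (α := fun _ => ℝ) 1 t w 0 = w 0 := by
  simp [Fin.insertNth, Fin.succAboveCases] <;> rfl
lemma ins12 : Fin.insertNth (α := fun _ => ℝ) 1 t w 2 = w 1 := by
  simp [Fin.insertNth, Fin.succAboveCases] <;> rfl
lemma ins20 : Fin.insertNth (α := fun _ => ℝ) 2 t w 0 = w 0 := by
  simp [Fin.insertNth, Fin.succAboveCases] <;> rfl
lemma ins21 : Fin.insertNth (α := fun _ => ℝ) 2 t w 1 = w 1 := by
  simp [Fin.insertNth, Fin.succAboveCases] <;> rfl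

-- X-line: `ℓ w t = (t, w₀, w₁ + 2 t w₀)`
lemma lX0 : shear 2 (Fin.insertNth (α := fun _ => ℝ) 0 t w) 0 = t := by
  rw [shear_apply0, insA]
lemma lX1 : shear 2 (Fin.insertNth (α := fun _ => ℝ) 0 t w) 1 = w 0 := by
  rw [shear_apply1, ins01]
lemma lX2 : shear 2 (Fin.insertNth (α := fun _ => ℝ) 0 t w) 2 = w 1 + 2 * t * w 0 := by
  rw [shear_apply2, insA, ins01, ins02]

-- Y-line: `ℓ w t = (w₀, t, w₁ - 2 w₀ t)`
lemma lY0 : shear (-2) (Fin.insertNth (α := fun _ => ℝ) 1 t w) 0 = w 0 := by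
  rw [shear_apply0, ins10]
lemma lY1 : shear (-2) (Fin.insertNth (α := fun _ => ℝ) 1 t w) 1 = t := by
  rw [shear_apply1, insA]
lemma lY2 : shear (-2) (Fin.insertNth (α := fun _ => ℝ) 1 t w) 2 = w 1 - 2 * w 0 * t := by
  rw [shear_apply2, insA, ins10, ins12]; ring

-- T-line: `ℓ w t = (w₀, w₁, t)`
lemma lT0 : shear 0 (Fin.insertNth (α := fun _ => ℝ) 2 t w) 0 = w 0 := by
  rw [shear_apply0, ins20]
lemma lT1 : shear 0 (Fin.insertNth (α := fun _ => ℝ) 2 t w) 1 = w 1 := by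
  rw [shear_apply1, ins21]
lemma lT2 : shear 0 (Fin.insertNth (α := fun _ => ℝ) 2 t w) 2 = t := by
  rw [shear_apply2, insA]; ring

end coords

/-- Direction vector `eᵢ + c e_j`. -/
def dvec (i : Fin 3) (c : ℝ) (j : Fin 3) : Fin 3 → ℝ :=
  fun m => (if m = i then 1 else 0) + c * (if m = j then 1 else 0)

lemma dvec_pt (i : Fin 3) (c : ℝ) (j : Fin 3) :
    ((dvec i c j, (0:ℝ)) : Pt) = vx i + c • vx j := by
  rw [Prod.ext_iff]
  constructor
  · funext m
    simp [dvec, vx, Pi.single_apply]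
  · simp [vx]

lemma fderiv_combo (L : Pt →L[ℝ] ℝ) (c : ℝ) (i j : Fin 3) :
    L ((dvec i c j, (0:ℝ)) : Pt) = L (vx i) + c * L (vx j) := by
  rw [dvec_pt, map_add, L.map_smul, smul_eq_mul]

lemma line_decomp (ℓ0 lt : Fin 3 → ℝ) (y t : ℝ) (d : Fin 3 → ℝ)
    (h : ∀ m, lt m = ℓ0 m + t * d m) :
    ((lt, y) : Pt) = ((ℓ0, y) : Pt) + t • ((d, (0:ℝ)) : Pt) := by
  rw [Prod.ext_iff]
  constructor
  · funext m
    show lt m = _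
    rw [h m]
    simp [smul_eq_mul]
  · simp

/-- IBP along `X`. -/
lemma ibpX (a : ℝ) (F : Pt → ℝ) (hF : ContDiffOn ℝ 1 F Hplus)
    (R' : ℝ) (hR' : 0 < R') (hFsupp : ∀ p : Pt, p ∉ eBall R' → F p = 0)
    (hg : IntegrableOn (fun p : Pt => p.2 ^ a * Xd F p) Hplus volume) :
    (∫ p in Hplus, p.2 ^ a * Xd F p) = 0 := by
  refine ibp_gen a F _ hF R' hR' hFsupp
    (fun w t => shear 2 (Fin.insertNth (α := fun _ => ℝ) 0 t w)) (mp_lineMap 0 2)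
    (fun w => ((dvec 0 (2 * w 0) 2, (0:ℝ)) : Pt))
    (fun p => ((dvec 0 (2 * p.1 1) 2, (0:ℝ)) : Pt))
    0 ?_ ?_ ?_ ?_ hg
  · intro w y t
    refine line_decomp _ _ y t _ ?_
    intro m
    fin_cases m
    · show shear 2 _ 0 = shear 2 _ 0 + t * dvec 0 (2 * w 0) 2 0
      rw [lX0, lX0]; simp [dvec]
    · show shear 2 _ 1 = shear 2 _ 1 + t * dvec 0 (2 * w 0) 2 1
      rw [lX1, lX1]; simp [dvec]
    · show shear 2 _ 2 = shear 2 _ 2 + t * dvec 0 (2 * w 0) 2 2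
      rw [lX2, lX2]; simp [dvec]; ring
  · intro w t; exact lX0 t w
  · intro w t y
    show ((dvec 0 (2 * shear 2 (Fin.insertNth (α := fun _ => ℝ) 0 t w) 1) 2, (0:ℝ)) : Pt) = _
    rw [lX1]
  · intro p _
    show p.2 ^ a * (pdx 0 F p + 2 * p.1 1 * pdx 2 F p) = _
    rw [fderiv_combo (fderiv ℝ F p) (2 * p.1 1) 0 2, ← pdx_def, ← pdx_def]

/-- IBP along `Y`. -/
lemma ibpY (a : ℝ) (F : Pt → ℝ) (hF : ContDiffOn ℝ 1 F Hplus)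
    (R' : ℝ) (hR' : 0 < R') (hFsupp : ∀ p : Pt, p ∉ eBall R' → F p = 0)
    (hg : IntegrableOn (fun p : Pt => p.2 ^ a * Yd F p) Hplus volume) :
    (∫ p in Hplus, p.2 ^ a * Yd F p) = 0 := by
  refine ibp_gen a F _ hF R' hR' hFsupp
    (fun w t => shear (-2) (Fin.insertNth (α := fun _ => ℝ) 1 t w)) (mp_lineMap 1 (-2))
    (fun w => ((dvec 1 (-(2 * w 0)) 2, (0:ℝ)) : Pt))
    (fun p => ((dvec 1 (-(2 * p.1 0)) 2, (0:ℝ)) : Pt))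
    1 ?_ ?_ ?_ ?_ hg
  · intro w y t
    refine line_decomp _ _ y t _ ?_
    intro m
    fin_cases m
    · show shear (-2) _ 0 = shear (-2) _ 0 + t * dvec 1 (-(2 * w 0)) 2 0
      rw [lY0, lY0]; simp [dvec]
    · show shear (-2) _ 1 = shear (-2) _ 1 + t * dvec 1 (-(2 * w 0)) 2 1
      rw [lY1, lY1]; simp [dvec]
    · show shear (-2) _ 2 = shear (-2) _ 2 + t * dvec 1 (-(2 * w 0)) 2 2
      rw [lY2, lY2]; simp [dvec]; ring
  · intro w t; exact lY1 t w
  · intro w t y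
    show ((dvec 1 (-(2 * shear (-2) (Fin.insertNth (α := fun _ => ℝ) 1 t w) 0)) 2, (0:ℝ)) : Pt) = _
    rw [lY0]
  · intro p _
    show p.2 ^ a * (pdx 1 F p - 2 * p.1 0 * pdx 2 F p) = _
    rw [fderiv_combo (fderiv ℝ F p) (-(2 * p.1 0)) 1 2, ← pdx_def, ← pdx_def]
    ring

/-- IBP along `∂₃` and hence `T`. -/
lemma ibpT (a : ℝ) (F : Pt → ℝ) (hF : ContDiffOn ℝ 1 F Hplus)
    (R' : ℝ) (hR' : 0 < R') (hFsupp : ∀ p : Pt, p ∉ eBall R' → F p = 0)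
    (hg : IntegrableOn (fun p : Pt => p.2 ^ a * Td F p) Hplus volume) :
    (∫ p in Hplus, p.2 ^ a * Td F p) = 0 := by
  have key : (∫ p in Hplus, p.2 ^ a * pdx 2 F p) = 0 := by
    refine ibp_gen a F _ hF R' hR' hFsupp
      (fun w t => shear 0 (Fin.insertNth (α := fun _ => ℝ) 2 t w)) (mp_lineMap 2 0)
      (fun _ => ((dvec 2 0 0, (0:ℝ)) : Pt))
      (fun _ => ((dvec 2 0 0, (0:ℝ)) : Pt))
      2 ?_ ?_ ?_ ?_ ?_
    · intro w y t
      refine line_decomp _ _ y t _ ?_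
      intro m
      fin_cases m
      · show shear 0 _ 0 = shear 0 _ 0 + t * dvec 2 0 0 0
        rw [lT0, lT0]; simp [dvec]
      · show shear 0 _ 1 = shear 0 _ 1 + t * dvec 2 0 0 1
        rw [lT1, lT1]; simp [dvec]
      · show shear 0 _ 2 = shear 0 _ 2 + t * dvec 2 0 0 2
        rw [lT2, lT2]; simp [dvec]
    · intro w t; exact lT2 t w
    · intro w t y; rfl
    · intro p _
      show p.2 ^ a * pdx 2 F p = _
      rw [fderiv_combo (fderiv ℝ F p) 0 2 0, ← pdx_def, ← pdx_def]
      ring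
    · have : (fun p : Pt => p.2 ^ a * pdx 2 F p)
          = fun p => (-1/4) * (p.2 ^ a * Td F p) := by
        funext p; show _ = (-1/4) * (p.2 ^ a * (-4 * pdx 2 F p)); ring
      rw [this]
      exact hg.const_mul _
  have : (fun p : Pt => p.2 ^ a * Td F p)
      = fun p => (-4) * (p.2 ^ a * pdx 2 F p) := by
    funext p; show p.2 ^ a * (-4 * pdx 2 F p) = _; ring
  rw [this, MeasureTheory.integral_const_mul, key]
  ring
/-! ### Vanishing of derivatives outside the support, regularity plumbing -/

/-- The open exterior region. -/
def Ox (r : ℝ) : Set Pt :=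
  {p | r ^ 2 < (p.1 0) ^ 2 + (p.1 1) ^ 2 + (p.1 2) ^ 2 + p.2 ^ 2}

lemma isOpen_Ox (r : ℝ) : IsOpen (Ox r) := by
  have hc : Continuous fun p : Pt =>
      (p.1 0) ^ 2 + (p.1 1) ^ 2 + (p.1 2) ^ 2 + p.2 ^ 2 := by fun_prop
  exact isOpen_lt continuous_const hc

lemma Ox_disjoint_eBall {r : ℝ} {p : Pt} (hp : p ∈ Ox r) : p ∉ eBall r := by
  intro hmem
  simp only [eBall, Set.mem_setOf_eq] at hmem
  simp only [Ox, Set.mem_setOf_eq] at hp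
  linarith

lemma notin_eBall_mem_Ox {r R : ℝ} (hr : 0 ≤ r) (hrR : r < R) {p : Pt}
    (hp : p ∉ eBall R) : p ∈ Ox r := by
  simp only [eBall, Set.mem_setOf_eq, not_lt] at hp
  simp only [Ox, Set.mem_setOf_eq]
  nlinarith

section vanish
variable {f : Pt → ℝ} {O : Set Pt} {p : Pt}

lemma vanish_fderiv (hO : IsOpen O) (h : ∀ q ∈ O, f q = 0) (hp : p ∈ O) :
    fderiv ℝ f p = 0 := by
  have hev : f =ᶠ[nhds p] fun _ => (0:ℝ) :=
    Filter.eventually_of_mem (hO.mem_nhds hp) h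
  rw [hev.fderiv_eq]
  exact fderiv_const_apply 0

lemma vanish_pdx (hO : IsOpen O) (h : ∀ q ∈ O, f q = 0) (hp : p ∈ O) (i : Fin 3) :
    pdx i f p = 0 := by rw [pdx_def, vanish_fderiv hO h hp]; rfl

lemma vanish_pdy (hO : IsOpen O) (h : ∀ q ∈ O, f q = 0) (hp : p ∈ O) :
    pdy f p = 0 := by rw [pdy_def, vanish_fderiv hO h hp]; rfl

lemma vanish_Xd (hO : IsOpen O) (h : ∀ q ∈ O, f q = 0) (hp : p ∈ O) :
    Xd f p = 0 := by
  show pdx 0 f p + 2 * p.1 1 * pdx 2 f p = 0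
  rw [vanish_pdx hO h hp, vanish_pdx hO h hp]; ring

lemma vanish_Yd (hO : IsOpen O) (h : ∀ q ∈ O, f q = 0) (hp : p ∈ O) :
    Yd f p = 0 := by
  show pdx 1 f p - 2 * p.1 0 * pdx 2 f p = 0
  rw [vanish_pdx hO h hp, vanish_pdx hO h hp]; ring

lemma vanish_Td (hO : IsOpen O) (h : ∀ q ∈ O, f q = 0) (hp : p ∈ O) :
    Td f p = 0 := by
  show -4 * pdx 2 f p = 0
  rw [vanish_pdx hO h hp]; ring

end vanish

section regularity
variable {f F : Pt → ℝ} {p : Pt}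

lemma cd1_pd (hf : ContDiffOn ℝ 2 f Hplus) (v : Pt) :
    ContDiffOn ℝ 1 (fun q => fderiv ℝ f q v) Hplus :=
  (hf.fderiv_of_isOpen isOpen_Hplus le_rfl).clm_apply contDiffOn_const

lemma cd1_coord (j : Fin 3) : ContDiffOn ℝ 1 (fun q : Pt => 2 * q.1 j) Hplus :=
  (contDiff_const.mul (coordCLM j).contDiff).contDiffOn

lemma cd1_Xd (hf : ContDiffOn ℝ 2 f Hplus) : ContDiffOn ℝ 1 (Xd f) Hplus := by
  rw [Xd_eq]
  exact (cd1_pd hf (vx 0)).add ((cd1_coord 1).mul (cd1_pd hf (vx 2)))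

lemma cd1_Yd (hf : ContDiffOn ℝ 2 f Hplus) : ContDiffOn ℝ 1 (Yd f) Hplus := by
  rw [Yd_eq]
  exact (cd1_pd hf (vx 1)).sub ((cd1_coord 0).mul (cd1_pd hf (vx 2)))

lemma cd1_Td (hf : ContDiffOn ℝ 2 f Hplus) : ContDiffOn ℝ 1 (Td f) Hplus := by
  rw [Td_eq]
  exact contDiffOn_const.mul (cd1_pd hf (vx 2))

lemma cd1_pdy (hf : ContDiffOn ℝ 2 f Hplus) : ContDiffOn ℝ 1 (pdy f) Hplus :=
  cd1_pd hf vy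

lemma contOn_pd (hF : ContDiffOn ℝ 1 F Hplus) (v : Pt) :
    ContinuousOn (fun q => fderiv ℝ F q v) Hplus :=
  (hF.continuousOn_fderiv_of_isOpen isOpen_Hplus le_rfl).clm_apply continuousOn_const

lemma contOn_coef (j : Fin 3) : ContinuousOn (fun q : Pt => 2 * q.1 j) Hplus := by
  fun_prop

lemma contOn_Xd (hF : ContDiffOn ℝ 1 F Hplus) : ContinuousOn (Xd F) Hplus := by
  rw [Xd_eq]
  exact (contOn_pd hF (vx 0)).add ((contOn_coef 1).mul (contOn_pd hF (vx 2)))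

lemma contOn_Yd (hF : ContDiffOn ℝ 1 F Hplus) : ContinuousOn (Yd F) Hplus := by
  rw [Yd_eq]
  exact (contOn_pd hF (vx 1)).sub ((contOn_coef 0).mul (contOn_pd hF (vx 2)))

lemma contOn_Td (hF : ContDiffOn ℝ 1 F Hplus) : ContinuousOn (Td F) Hplus := by
  rw [Td_eq]
  exact continuousOn_const.mul (contOn_pd hF (vx 2))

lemma contOn_pdy (hF : ContDiffOn ℝ 1 F Hplus) : ContinuousOn (pdy F) Hplus :=
  contOn_pd hF vy

lemma contOn_ya {a : ℝ} : ContinuousOn (fun p : Pt => p.2 ^ a) Hplus := by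
  intro p hp
  have hy : (0:ℝ) < p.2 := hp
  exact ((Real.continuousAt_rpow_const p.2 a (Or.inl (ne_of_gt hy))).comp
    continuous_snd.continuousAt).continuousWithinAt

end regularity
/-! ### Integrability lemmas -/

lemma measurableSet_eBall (R : ℝ) : MeasurableSet (eBall R) := by
  have : IsOpen (eBall R) := by
    have hc : Continuous fun p : Pt =>
        (p.1 0) ^ 2 + (p.1 1) ^ 2 + (p.1 2) ^ 2 + p.2 ^ 2 := by fun_prop
    exact isOpen_lt hc continuous_const
  exact this.measurableSet

lemma measurableSet_Sball (R : ℝ) : MeasurableSet (eBall R ∩ Hplus) :=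
  (measurableSet_eBall R).inter measurableSet_Hplus

/-- `y^a` is integrable on a bounded piece of the upper half-space when `a > -1`. -/
lemma integrableOn_ya {a : ℝ} (ha : -1 < a) {R : ℝ} (hR : 0 < R) :
    IntegrableOn (fun p : Pt => p.2 ^ a) (eBall R ∩ Hplus) volume := by
  set B : Set (Fin 3 → ℝ) := Set.pi Set.univ (fun _ => Set.Icc (-R) R) with hB
  have hBmeas : MeasurableSet B := MeasurableSet.univ_pi fun _ => measurableSet_Icc
  have hBfin : volume B < ⊤ := by
    rw [hB, volume_pi_pi]
    simp only [Real.volume_Icc, Finset.prod_const]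
    exact ENNReal.pow_lt_top ENNReal.ofReal_lt_top
  have hsub : eBall R ∩ Hplus ⊆ B ×ˢ Set.Ioc 0 R := by
    rintro ⟨x, y⟩ ⟨h1, h2⟩
    simp only [eBall, Set.mem_setOf_eq] at h1
    have hy : 0 < y := h2
    constructor
    · intro j _
      have hj : (x j) ^ 2 ≤ (x 0) ^ 2 + (x 1) ^ 2 + (x 2) ^ 2 + y ^ 2 := by
        have hd : j = 0 ∨ j = 1 ∨ j = 2 := by fin_cases j <;> simp
        rcases hd with h | h | h <;> rw [h] <;> nlinarith [sq_nonneg (x 0), sq_nonneg (x 1),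
          sq_nonneg (x 2), sq_nonneg y]
      have : (x j) ^ 2 < R ^ 2 := lt_of_le_of_lt hj h1
      constructor <;> nlinarith [abs_nonneg (x j), sq_abs (x j)]
    · have hy2 : y ^ 2 < R ^ 2 := by nlinarith [sq_nonneg (x 0), sq_nonneg (x 1), sq_nonneg (x 2)]
      exact ⟨hy, by nlinarith⟩
  refine IntegrableOn.mono_set ?_ hsub
  have hker : IntegrableOn (fun y : ℝ => y ^ a) (Set.Ioc 0 R) volume := by
    have := intervalIntegral.intervalIntegrable_rpow' (a := 0) (b := R) ha
    rw [intervalIntegrable_iff_integrableOn_Ioc_of_le hR.le] at this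
    exact this
  have h1 : IntegrableOn (fun _ : Fin 3 → ℝ => (1:ℝ)) B volume := by
    exact integrableOn_const hBfin.ne
  have := Integrable.mul_prod (f := fun _ : Fin 3 → ℝ => (1:ℝ)) (g := fun y : ℝ => y ^ a)
    (μ := volume.restrict B) (ν := volume.restrict (Set.Ioc 0 R)) h1 hker
  rw [Measure.prod_restrict] at this
  refine this.congr ?_
  filter_upwards with p
  simp
/-! ### The dominating function -/

/-- Master dominating quantity. -/
def G0 (u : Pt → ℝ) (p : Pt) : ℝ :=
  1 + gradSq u p + gradSq (Xd u) p + gradSq (Yd u) p + |Td (Xd u) p| + |Td (Yd u) p|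

lemma abs_le_one_add_sq (x : ℝ) : |x| ≤ 1 + x ^ 2 := by
  nlinarith [abs_nonneg x, sq_abs x]

lemma gradSq_nonneg (f : Pt → ℝ) (p : Pt) : 0 ≤ gradSq f p := by
  simp only [gradSq]; positivity

lemma G0_nonneg (u : Pt → ℝ) (p : Pt) : 0 ≤ G0 u p := by
  have := gradSq_nonneg u p; have := gradSq_nonneg (Xd u) p; have := gradSq_nonneg (Yd u) p
  have := abs_nonneg (Td (Xd u) p); have := abs_nonneg (Td (Yd u) p)
  simp only [G0]; linarith

section bounds
variable (u : Pt → ℝ) (p : Pt)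

lemma bnd_Xu : |Xd u p| ≤ G0 u p := by
  have h := abs_le_one_add_sq (Xd u p)
  have := gradSq_nonneg (Xd u) p; have := gradSq_nonneg (Yd u) p
  have := abs_nonneg (Td (Xd u) p); have := abs_nonneg (Td (Yd u) p)
  simp only [G0, gradSq] at *; nlinarith [sq_nonneg (Yd u p), sq_nonneg (pdy u p)]

lemma bnd_Yu : |Yd u p| ≤ G0 u p := by
  have h := abs_le_one_add_sq (Yd u p)
  have := gradSq_nonneg (Xd u) p; have := gradSq_nonneg (Yd u) p
  have := abs_nonneg (Td (Xd u) p); have := abs_nonneg (Td (Yd u) p)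
  simp only [G0, gradSq] at *; nlinarith [sq_nonneg (Xd u p), sq_nonneg (pdy u p)]

lemma bnd_yu : |pdy u p| ≤ G0 u p := by
  have h := abs_le_one_add_sq (pdy u p)
  have := gradSq_nonneg (Xd u) p; have := gradSq_nonneg (Yd u) p
  have := abs_nonneg (Td (Xd u) p); have := abs_nonneg (Td (Yd u) p)
  simp only [G0, gradSq] at *; nlinarith [sq_nonneg (Xd u p), sq_nonneg (Yd u p)]

lemma bnd_XXu : |Xd (Xd u) p| ≤ G0 u p := by
  have h := abs_le_one_add_sq (Xd (Xd u) p)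
  have := gradSq_nonneg u p; have := gradSq_nonneg (Yd u) p
  have := abs_nonneg (Td (Xd u) p); have := abs_nonneg (Td (Yd u) p)
  simp only [G0, gradSq] at *; nlinarith [sq_nonneg (Yd (Xd u) p), sq_nonneg (pdy (Xd u) p)]

lemma bnd_YXu : |Yd (Xd u) p| ≤ G0 u p := by
  have h := abs_le_one_add_sq (Yd (Xd u) p)
  have := gradSq_nonneg u p; have := gradSq_nonneg (Yd u) p
  have := abs_nonneg (Td (Xd u) p); have := abs_nonneg (Td (Yd u) p)
  simp only [G0, gradSq] at *; nlinarith [sq_nonneg (Xd (Xd u) p), sq_nonneg (pdy (Xd u) p)]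

lemma bnd_yXu : |pdy (Xd u) p| ≤ G0 u p := by
  have h := abs_le_one_add_sq (pdy (Xd u) p)
  have := gradSq_nonneg u p; have := gradSq_nonneg (Yd u) p
  have := abs_nonneg (Td (Xd u) p); have := abs_nonneg (Td (Yd u) p)
  simp only [G0, gradSq] at *; nlinarith [sq_nonneg (Xd (Xd u) p), sq_nonneg (Yd (Xd u) p)]

lemma bnd_XYu : |Xd (Yd u) p| ≤ G0 u p := by
  have h := abs_le_one_add_sq (Xd (Yd u) p)
  have := gradSq_nonneg u p; have := gradSq_nonneg (Xd u) p
  have := abs_nonneg (Td (Xd u) p); have := abs_nonneg (Td (Yd u) p)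
  simp only [G0, gradSq] at *; nlinarith [sq_nonneg (Yd (Yd u) p), sq_nonneg (pdy (Yd u) p)]

lemma bnd_YYu : |Yd (Yd u) p| ≤ G0 u p := by
  have h := abs_le_one_add_sq (Yd (Yd u) p)
  have := gradSq_nonneg u p; have := gradSq_nonneg (Xd u) p
  have := abs_nonneg (Td (Xd u) p); have := abs_nonneg (Td (Yd u) p)
  simp only [G0, gradSq] at *; nlinarith [sq_nonneg (Xd (Yd u) p), sq_nonneg (pdy (Yd u) p)]

lemma bnd_yYu : |pdy (Yd u) p| ≤ G0 u p := by
  have h := abs_le_one_add_sq (pdy (Yd u) p)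
  have := gradSq_nonneg u p; have := gradSq_nonneg (Xd u) p
  have := abs_nonneg (Td (Xd u) p); have := abs_nonneg (Td (Yd u) p)
  simp only [G0, gradSq] at *; nlinarith [sq_nonneg (Xd (Yd u) p), sq_nonneg (Yd (Yd u) p)]

lemma bnd_TXu : |Td (Xd u) p| ≤ G0 u p := by
  have := gradSq_nonneg u p; have := gradSq_nonneg (Xd u) p; have := gradSq_nonneg (Yd u) p
  have := abs_nonneg (Td (Yd u) p)
  simp only [G0]; linarith

lemma bnd_TYu : |Td (Yd u) p| ≤ G0 u p := by
  have := gradSq_nonneg u p; have := gradSq_nonneg (Xd u) p; have := gradSq_nonneg (Yd u) p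
  have := abs_nonneg (Td (Xd u) p)
  simp only [G0]; linarith

end bounds

lemma bnd_Tu {u : Pt → ℝ} {p : Pt} (hu : ContDiffAt ℝ 2 u p) :
    |Td u p| ≤ 2 * G0 u p := by
  have hc : Td u p = Xd (Yd u) p - Yd (Xd u) p := by
    have := comm_XY hu; linarith
  rw [hc]
  calc |Xd (Yd u) p - Yd (Xd u) p| ≤ |Xd (Yd u) p| + |Yd (Xd u) p| := abs_sub _ _
    _ ≤ G0 u p + G0 u p := add_le_add (bnd_XYu u p) (bnd_YXu u p)
    _ = 2 * G0 u p := by ring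

/-- Integrability of the dominating function. -/
lemma integrableOn_weight_G0 {a : ℝ} (ha : -1 < a) {R' : ℝ} (hR' : 0 < R') {u : Pt → ℝ}
    (h1 : IntegrableOn (fun p : Pt => p.2 ^ a * gradSq u p) (eBall R' ∩ Hplus) volume)
    (h2 : IntegrableOn (fun p : Pt => p.2 ^ a * gradSq (Xd u) p) (eBall R' ∩ Hplus) volume)
    (h3 : IntegrableOn (fun p : Pt => p.2 ^ a * gradSq (Yd u) p) (eBall R' ∩ Hplus) volume)
    (h4 : IntegrableOn (fun p : Pt => p.2 ^ a * |Td (Xd u) p|) (eBall R' ∩ Hplus) volume)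
    (h5 : IntegrableOn (fun p : Pt => p.2 ^ a * |Td (Yd u) p|) (eBall R' ∩ Hplus) volume) :
    IntegrableOn (fun p : Pt => p.2 ^ a * G0 u p) (eBall R' ∩ Hplus) volume := by
  have : (fun p : Pt => p.2 ^ a * G0 u p)
      = fun p => ((((p.2 ^ a + p.2 ^ a * gradSq u p) + p.2 ^ a * gradSq (Xd u) p)
          + p.2 ^ a * gradSq (Yd u) p) + p.2 ^ a * |Td (Xd u) p|) + p.2 ^ a * |Td (Yd u) p| := by
    funext p; simp only [G0]; ring
  rw [this]
  exact (((((integrableOn_ya ha hR').add h1).add h2).add h3).add h4).add h5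

/-- Dominated integrability on the half-space. -/
lemma integrableOn_of_dom {a : ℝ} {u h : Pt → ℝ} {C R' : ℝ}
    (hDom : IntegrableOn (fun p : Pt => p.2 ^ a * G0 u p) (eBall R' ∩ Hplus) volume)
    (hmeas : AEStronglyMeasurable h (volume.restrict Hplus))
    (hzero : ∀ p ∈ Hplus, p ∉ eBall R' → h p = 0)
    (hbound : ∀ p ∈ eBall R' ∩ Hplus, |h p| ≤ C * (p.2 ^ a * G0 u p)) :
    IntegrableOn h Hplus volume := by
  have hS : MeasurableSet (eBall R' ∩ Hplus) := measurableSet_Sball R'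
  have hsub : eBall R' ∩ Hplus ⊆ Hplus := Set.inter_subset_right
  have hmeas' : AEStronglyMeasurable h (volume.restrict (eBall R' ∩ Hplus)) :=
    hmeas.mono_measure (Measure.restrict_mono hsub le_rfl)
  have hint1 : IntegrableOn h (eBall R' ∩ Hplus) volume := by
    refine Integrable.mono' (hDom.const_mul C) hmeas' ?_
    rw [MeasureTheory.ae_restrict_iff' hS]
    filter_upwards with p hp
    rw [Real.norm_eq_abs]
    exact hbound p hp
  have hint2 : IntegrableOn h (Hplus \ (eBall R' ∩ Hplus)) volume := by
    refine IntegrableOn.congr_fun (integrableOn_zero) ?_ (measurableSet_Hplus.diff hS)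
    rintro p ⟨hp1, hp2⟩
    have : p ∉ eBall R' := fun hb => hp2 ⟨hb, hp1⟩
    exact (hzero p hp1 this).symm
  exact (hint1.union hint2).mono_set fun p hp => by
    by_cases hb : p ∈ eBall R' ∩ Hplus
    · exact Or.inl hb
    · exact Or.inr ⟨hp, hb⟩
/-! ### Bounds for smooth compactly supported factors -/

section smoothfactors
variable {ξ : Pt → ℝ}

lemma cdT_pd (hξ : ContDiff ℝ (⊤ : ℕ∞) ξ) (v : Pt) :
    ContDiff ℝ (⊤ : ℕ∞) (fun q => fderiv ℝ ξ q v) :=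
  (hξ.fderiv_right (by simp)).clm_apply contDiff_const

lemma cdT_coord (j : Fin 3) : ContDiff ℝ (⊤ : ℕ∞) (fun q : Pt => 2 * q.1 j) :=
  contDiff_const.mul (coordCLM j).contDiff

lemma cdT_Xd (hξ : ContDiff ℝ (⊤ : ℕ∞) ξ) : ContDiff ℝ (⊤ : ℕ∞) (Xd ξ) := by
  rw [Xd_eq]
  exact (cdT_pd hξ (vx 0)).add ((cdT_coord 1).mul (cdT_pd hξ (vx 2)))

lemma cdT_Yd (hξ : ContDiff ℝ (⊤ : ℕ∞) ξ) : ContDiff ℝ (⊤ : ℕ∞) (Yd ξ) := by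
  rw [Yd_eq]
  exact (cdT_pd hξ (vx 1)).sub ((cdT_coord 0).mul (cdT_pd hξ (vx 2)))

lemma cdT_Td (hξ : ContDiff ℝ (⊤ : ℕ∞) ξ) : ContDiff ℝ (⊤ : ℕ∞) (Td ξ) := by
  rw [Td_eq]
  exact contDiff_const.mul (cdT_pd hξ (vx 2))

lemma cdT_pdy (hξ : ContDiff ℝ (⊤ : ℕ∞) ξ) : ContDiff ℝ (⊤ : ℕ∞) (pdy ξ) := cdT_pd hξ vy

/-- The combined bound function for all the `ξ`-factors we need. -/
def XiS (ξ : Pt → ℝ) (p : Pt) : ℝ :=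
  |ξ p| + |Xd ξ p| + |Yd ξ p| + |Td ξ p| + |pdy ξ p|
  + |Xd (Xd ξ) p| + |Xd (Yd ξ) p| + |Xd (pdy ξ) p|
  + |Yd (Xd ξ) p| + |Yd (Yd ξ) p| + |Yd (pdy ξ) p|

lemma continuous_XiS (hξ : ContDiff ℝ (⊤ : ℕ∞) ξ) : Continuous (XiS ξ) := by
  unfold XiS
  have l0 := hξ.continuous
  have l1 := (cdT_Xd hξ).continuous
  have l2 := (cdT_Yd hξ).continuous
  have l3 := (cdT_Td hξ).continuous
  have l4 := (cdT_pdy hξ).continuous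
  have l5 := (cdT_Xd (cdT_Xd hξ)).continuous
  have l6 := (cdT_Xd (cdT_Yd hξ)).continuous
  have l7 := (cdT_Xd (cdT_pdy hξ)).continuous
  have l8 := (cdT_Yd (cdT_Xd hξ)).continuous
  have l9 := (cdT_Yd (cdT_Yd hξ)).continuous
  have l10 := (cdT_Yd (cdT_pdy hξ)).continuous
  fun_prop

/-- All the `ξ`-factors are uniformly bounded on the bounded set `eBall R' ∩ Hplus`. -/
lemma exists_XiS_bound (hξ : ContDiff ℝ (⊤ : ℕ∞) ξ) (R' : ℝ) (hR' : 0 < R') :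
    ∃ M : ℝ, 0 ≤ M ∧ ∀ p ∈ eBall R' ∩ Hplus, XiS ξ p ≤ M := by
  have hK : IsCompact (Metric.closedBall (0 : Pt) R') := isCompact_closedBall _ _
  obtain ⟨M, hM⟩ := hK.exists_bound_of_continuousOn (continuous_XiS hξ).continuousOn
  refine ⟨max M 0, le_max_right _ _, ?_⟩
  intro p hp
  have hmem : p ∈ Metric.closedBall (0 : Pt) R' := by
    obtain ⟨h1, h2⟩ := hp
    simp only [eBall, Set.mem_setOf_eq] at h1
    have hy : (0:ℝ) < p.2 := h2
    rw [Metric.mem_closedBall, dist_zero_right]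
    rw [Prod.norm_def]
    have hx : ‖p.1‖ ≤ R' := by
      rw [pi_norm_le_iff_of_nonneg hR'.le]
      intro j
      have hj : (p.1 j) ^ 2 ≤ (p.1 0) ^ 2 + (p.1 1) ^ 2 + (p.1 2) ^ 2 + p.2 ^ 2 := by
        have hd : j = 0 ∨ j = 1 ∨ j = 2 := by fin_cases j <;> simp
        rcases hd with h | h | h <;> rw [h] <;> nlinarith [sq_nonneg (p.1 0), sq_nonneg (p.1 1),
          sq_nonneg (p.1 2), sq_nonneg p.2]
      have : (p.1 j) ^ 2 < R' ^ 2 := lt_of_le_of_lt hj h1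
      rw [Real.norm_eq_abs]
      nlinarith [abs_nonneg (p.1 j), sq_abs (p.1 j)]
    have hyb : ‖p.2‖ ≤ R' := by
      rw [Real.norm_eq_abs, abs_of_pos hy]
      nlinarith [sq_nonneg (p.1 0), sq_nonneg (p.1 1), sq_nonneg (p.1 2)]
    exact max_le hx hyb
  calc XiS ξ p = ‖XiS ξ p‖ := by
        rw [Real.norm_eq_abs, abs_of_nonneg]
        unfold XiS; positivity
    _ ≤ M := hM p hmem
    _ ≤ max M 0 := le_max_left _ _

end smoothfactors

/-! ### Sum bounds -/

lemma prod_bound {x y G M : ℝ} (hx : |x| ≤ G) (hy : |y| ≤ M) (hG : 0 ≤ G) (hM : 0 ≤ M) :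
    |x * y| ≤ M * G := by
  rw [abs_mul]
  calc |x| * |y| ≤ G * M := mul_le_mul hx hy (abs_nonneg _) hG
    _ = M * G := by ring

lemma sum6_bound {a1 b1 a2 b2 a3 b3 a4 b4 a5 b5 a6 b6 G M : ℝ}
    (h1 : |a1| ≤ G) (h2 : |a2| ≤ G) (h3 : |a3| ≤ G) (h4 : |a4| ≤ G) (h5 : |a5| ≤ G)
    (h6 : |a6| ≤ G)
    (e1 : |b1| ≤ M) (e2 : |b2| ≤ M) (e3 : |b3| ≤ M) (e4 : |b4| ≤ M) (e5 : |b5| ≤ M)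
    (e6 : |b6| ≤ M) (hG : 0 ≤ G) (hM : 0 ≤ M) :
    |(a1 * b1 + a2 * b2) + (a3 * b3 + a4 * b4) + (a5 * b5 + a6 * b6)| ≤ 6 * M * G := by
  have k1 := prod_bound h1 e1 hG hM
  have k2 := prod_bound h2 e2 hG hM
  have k3 := prod_bound h3 e3 hG hM
  have k4 := prod_bound h4 e4 hG hM
  have k5 := prod_bound h5 e5 hG hM
  have k6 := prod_bound h6 e6 hG hM
  have t1 := abs_add_le (a1 * b1 + a2 * b2 + (a3 * b3 + a4 * b4)) (a5 * b5 + a6 * b6)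
  have t2 := abs_add_le (a1 * b1 + a2 * b2) (a3 * b3 + a4 * b4)
  have t3 := abs_add_le (a1 * b1) (a2 * b2)
  have t4 := abs_add_le (a3 * b3) (a4 * b4)
  have t5 := abs_add_le (a5 * b5) (a6 * b6)
  linarith

lemma weight_bound {y a P G C : ℝ} (hy : 0 < y) (hG : 0 ≤ G) (h : |P| ≤ C * G) :
    |y ^ a * P| ≤ C * (y ^ a * G) := by
  rw [abs_mul, abs_of_nonneg (Real.rpow_nonneg hy.le a)]
  calc y ^ a * |P| ≤ y ^ a * (C * G) :=
        mul_le_mul_of_nonneg_left h (Real.rpow_nonneg hy.le a)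
    _ = C * (y ^ a * G) := by ring
/-! ### More bound helpers -/

lemma XiS_bnd {ξ : Pt → ℝ} {p : Pt} {M : ℝ} (h : XiS ξ p ≤ M) :
    |ξ p| ≤ M ∧ |Xd ξ p| ≤ M ∧ |Yd ξ p| ≤ M ∧ |Td ξ p| ≤ M ∧ |pdy ξ p| ≤ M
    ∧ |Xd (Xd ξ) p| ≤ M ∧ |Xd (Yd ξ) p| ≤ M ∧ |Xd (pdy ξ) p| ≤ M
    ∧ |Yd (Xd ξ) p| ≤ M ∧ |Yd (Yd ξ) p| ≤ M ∧ |Yd (pdy ξ) p| ≤ M := by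
  unfold XiS at h
  have n0 := abs_nonneg (ξ p); have n1 := abs_nonneg (Xd ξ p); have n2 := abs_nonneg (Yd ξ p)
  have n3 := abs_nonneg (Td ξ p); have n4 := abs_nonneg (pdy ξ p)
  have n5 := abs_nonneg (Xd (Xd ξ) p); have n6 := abs_nonneg (Xd (Yd ξ) p)
  have n7 := abs_nonneg (Xd (pdy ξ) p); have n8 := abs_nonneg (Yd (Xd ξ) p)
  have n9 := abs_nonneg (Yd (Yd ξ) p); have n10 := abs_nonneg (Yd (pdy ξ) p)
  refine ⟨by linarith, by linarith, by linarith, by linarith, by linarith, by linarith,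
    by linarith, by linarith, by linarith, by linarith, by linarith⟩

/-- Bound for the `R`-integrand shape. -/
lemma bnd_Rint {x1 x2 x3 x4 b1 b2 b3 b4 G M : ℝ}
    (h1 : |x1| ≤ G) (h2 : |x2| ≤ G) (h3 : |x3| ≤ G) (h4 : |x4| ≤ G)
    (e1 : |b1| ≤ M) (e2 : |b2| ≤ M) (e3 : |b3| ≤ M) (e4 : |b4| ≤ M)
    (hG : 0 ≤ G) (hM : 0 ≤ M) :
    |-(x1 * b1 + x2 * b2 + x3 * b3) + 2 * x4 * b4| ≤ 5 * M * G := by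
  have k1 := prod_bound h1 e1 hG hM
  have k2 := prod_bound h2 e2 hG hM
  have k3 := prod_bound h3 e3 hG hM
  have k4 := prod_bound h4 e4 hG hM
  have t0 := abs_add_le (-(x1 * b1 + x2 * b2 + x3 * b3)) (2 * x4 * b4)
  have t1 : |-(x1 * b1 + x2 * b2 + x3 * b3)| = |x1 * b1 + x2 * b2 + x3 * b3| := abs_neg _
  have t2 := abs_add_le (x1 * b1 + x2 * b2) (x3 * b3)
  have t3 := abs_add_le (x1 * b1) (x2 * b2)
  have t4 : |2 * x4 * b4| = 2 * |x4 * b4| := by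
    rw [show 2 * x4 * b4 = 2 * (x4 * b4) by ring, abs_mul]
    simp
  linarith

/-- Bound for the two-term integrand shapes (`g₂`, `g₃`): second coefficient may be `2G`. -/
lemma bnd_two {x1 x2 b1 b2 G M c : ℝ}
    (h1 : |x1| ≤ G) (h2 : |x2| ≤ c * G)
    (e1 : |b1| ≤ M) (e2 : |b2| ≤ M) (hG : 0 ≤ G) (hM : 0 ≤ M) (hc : 0 ≤ c) :
    |x1 * b1 + x2 * b2| ≤ (1 + c) * M * G := by
  have k1 := prod_bound h1 e1 hG hM
  have k2 : |x2 * b2| ≤ M * (c * G) := prod_bound h2 e2 (by positivity) hM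
  have t := abs_add_le (x1 * b1) (x2 * b2)
  nlinarith
/-- **Lemma 3** (integration by parts along `X` and `Y`). -/
theorem integration_by_parts_XY
    (a : ℝ) (ha : a ∈ Set.Ioo (-1 : ℝ) 1)
    (u : Pt → ℝ) (hC2 : ContDiffOn ℝ 2 u Hplus)
    (hint : ∀ R > 0,
      IntegrableOn (fun p => p.2 ^ a * gradSq u p) (eBall R ∩ Hplus) volume ∧
      IntegrableOn (fun p => p.2 ^ a * gradSq (Xd u) p) (eBall R ∩ Hplus) volume ∧
      IntegrableOn (fun p => p.2 ^ a * gradSq (Yd u) p) (eBall R ∩ Hplus) volume ∧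
      IntegrableOn (fun p => p.2 ^ a * |Td (Xd u) p|) (eBall R ∩ Hplus) volume ∧
      IntegrableOn (fun p => p.2 ^ a * |Td (Yd u) p|) (eBall R ∩ Hplus) volume)
    (ξ : Pt → ℝ) (hξs : ContDiff ℝ (⊤ : ℕ∞) ξ)
    (hsupp : ∃ R > 0, ∀ p : Pt, p ∉ eBall R → ξ p = 0) :
    ((∫ p in Hplus, p.2 ^ a * gradInner u (Xd ξ) p)
      = ∫ p in Hplus, p.2 ^ a * (-(gradInner (Xd u) ξ p) + 2 * Td (Yd u) p * ξ p)) ∧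
    ((∫ p in Hplus, p.2 ^ a * gradInner u (Yd ξ) p)
      = ∫ p in Hplus, p.2 ^ a * (-(gradInner (Yd u) ξ p) - 2 * Td (Xd u) p * ξ p)) := by
  obtain ⟨R₀, hR₀, hsupp0⟩ := hsupp
  set R' : ℝ := R₀ + 1 with hR'def
  have hR' : 0 < R' := by linarith
  have hξ2 : ContDiff ℝ 2 ξ := hξs.of_le (WithTop.coe_le_coe.mpr le_top)
  have hξ2on : ContDiffOn ℝ 2 ξ Hplus := hξ2.contDiffOn
  have hξ1on : ContDiffOn ℝ 1 ξ Hplus := hξ2on.of_le one_le_two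
  have hu_at : ∀ p ∈ Hplus, ContDiffAt ℝ 2 u p :=
    fun p hp => hC2.contDiffAt (isOpen_Hplus.mem_nhds hp)
  have hξ_at : ∀ p : Pt, ContDiffAt ℝ 2 ξ p := fun p => hξ2.contDiffAt
  have hdξ : ∀ p : Pt, DifferentiableAt ℝ ξ p :=
    fun p => (hξ_at p).differentiableAt two_ne_zero
  obtain ⟨h1i, h2i, h3i, h4i, h5i⟩ := hint R' hR'
  have hDom := integrableOn_weight_G0 ha.1 hR' h1i h2i h3i h4i h5i
  obtain ⟨M, hM0, hMb⟩ := exists_XiS_bound hξs R' hR'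
  -- vanishing outside the support
  have hO : IsOpen (Ox R₀) := isOpen_Ox R₀
  have hξ0 : ∀ q ∈ Ox R₀, ξ q = 0 := fun q hq => hsupp0 q (Ox_disjoint_eBall hq)
  have hXξ0 : ∀ q ∈ Ox R₀, Xd ξ q = 0 := fun q hq => vanish_Xd hO hξ0 hq
  have hYξ0 : ∀ q ∈ Ox R₀, Yd ξ q = 0 := fun q hq => vanish_Yd hO hξ0 hq
  have hTξ0 : ∀ q ∈ Ox R₀, Td ξ q = 0 := fun q hq => vanish_Td hO hξ0 hq
  have hyξ0 : ∀ q ∈ Ox R₀, pdy ξ q = 0 := fun q hq => vanish_pdy hO hξ0 hq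
  have hmemO : ∀ p : Pt, p ∉ eBall R' → p ∈ Ox R₀ :=
    fun p hp => notin_eBall_mem_Ox hR₀.le (by linarith) hp
  have hA0 : ∀ q ∈ Ox R₀, gradInner u ξ q = 0 := by
    intro q hq
    show Xd u q * Xd ξ q + Yd u q * Yd ξ q + pdy u q * pdy ξ q = 0
    rw [hXξ0 q hq, hYξ0 q hq, hyξ0 q hq]; ring
  have hB0 : ∀ q ∈ Ox R₀, Td u q * ξ q = 0 := by
    intro q hq; rw [hξ0 q hq]; ring
  have hC0 : ∀ q ∈ Ox R₀, Yd u q * ξ q = 0 := by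
    intro q hq; rw [hξ0 q hq]; ring
  have hC20 : ∀ q ∈ Ox R₀, Xd u q * ξ q = 0 := by
    intro q hq; rw [hξ0 q hq]; ring
  -- regularity
  have cdXu := cd1_Xd hC2
  have cdYu := cd1_Yd hC2
  have cdTu := cd1_Td hC2
  have cdyu := cd1_pdy hC2
  have cdXξ := cd1_Xd hξ2on
  have cdYξ := cd1_Yd hξ2on
  have cdyξ := cd1_pdy hξ2on
  have cdA : ContDiffOn ℝ 1 (fun q => gradInner u ξ q) Hplus := by
    show ContDiffOn ℝ 1
      (fun q => Xd u q * Xd ξ q + Yd u q * Yd ξ q + pdy u q * pdy ξ q) Hplus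
    exact ((cdXu.mul cdXξ).add (cdYu.mul cdYξ)).add (cdyu.mul cdyξ)
  have cdB : ContDiffOn ℝ 1 (fun q => Td u q * ξ q) Hplus := cdTu.mul hξ1on
  have cdC : ContDiffOn ℝ 1 (fun q => Yd u q * ξ q) Hplus := cdYu.mul hξ1on
  have cdC2 : ContDiffOn ℝ 1 (fun q => Xd u q * ξ q) Hplus := cdXu.mul hξ1on
  -- supports
  have hAsupp : ∀ p : Pt, p ∉ eBall R' → gradInner u ξ p = 0 :=
    fun p hp => hA0 p (hmemO p hp)
  have hBsupp : ∀ p : Pt, p ∉ eBall R' → Td u p * ξ p = 0 :=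
    fun p hp => hB0 p (hmemO p hp)
  have hCsupp : ∀ p : Pt, p ∉ eBall R' → Yd u p * ξ p = 0 :=
    fun p hp => hC0 p (hmemO p hp)
  have hC2supp : ∀ p : Pt, p ∉ eBall R' → Xd u p * ξ p = 0 :=
    fun p hp => hC20 p (hmemO p hp)
  -- continuity of the `u`-derivative factors
  have co1u : ContinuousOn (Xd u) Hplus := contOn_Xd (hC2.of_le one_le_two)
  have co1uY : ContinuousOn (Yd u) Hplus := contOn_Yd (hC2.of_le one_le_two)
  have co1uy : ContinuousOn (pdy u) Hplus := contOn_pdy (hC2.of_le one_le_two)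
  have coXXu : ContinuousOn (Xd (Xd u)) Hplus := contOn_Xd cdXu
  have coYXu : ContinuousOn (Yd (Xd u)) Hplus := contOn_Yd cdXu
  have coyXu : ContinuousOn (pdy (Xd u)) Hplus := contOn_pdy cdXu
  have coXYu : ContinuousOn (Xd (Yd u)) Hplus := contOn_Xd cdYu
  have coYYu : ContinuousOn (Yd (Yd u)) Hplus := contOn_Yd cdYu
  have coyYu : ContinuousOn (pdy (Yd u)) Hplus := contOn_pdy cdYu
  have coTXu : ContinuousOn (Td (Xd u)) Hplus := contOn_Td cdXu
  have coTYu : ContinuousOn (Td (Yd u)) Hplus := contOn_Td cdYu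
  -- continuity of ξ-factors (global)
  have coξ : Continuous ξ := hξs.continuous
  have coXξg : Continuous (Xd ξ) := (cdT_Xd hξs).continuous
  have coYξg : Continuous (Yd ξ) := (cdT_Yd hξs).continuous
  have coTξg : Continuous (Td ξ) := (cdT_Td hξs).continuous
  have coyξg : Continuous (pdy ξ) := (cdT_pdy hξs).continuous
  -- integrability of the integrands
  have hRi : IntegrableOn
      (fun p : Pt => p.2 ^ a * (-(gradInner (Xd u) ξ p) + 2 * Td (Yd u) p * ξ p))
      Hplus volume := by
    refine integrableOn_of_dom (C := 5 * M) hDom ?_ ?_ ?_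
    · refine ContinuousOn.aestronglyMeasurable ?_ measurableSet_Hplus
      refine ContinuousOn.mul contOn_ya (ContinuousOn.add (ContinuousOn.neg ?_) ?_)
      · show ContinuousOn
          (fun p => Xd (Xd u) p * Xd ξ p + Yd (Xd u) p * Yd ξ p
            + pdy (Xd u) p * pdy ξ p) Hplus
        exact ((coXXu.mul coXξg.continuousOn).add (coYXu.mul coYξg.continuousOn)).add
          (coyXu.mul coyξg.continuousOn)
      · exact (continuousOn_const.mul coTYu).mul coξ.continuousOn
    · intro p hp hnb
      have hpO := hmemO p hnb
      show p.2 ^ a * (-(Xd (Xd u) p * Xd ξ p + Yd (Xd u) p * Yd ξ p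
        + pdy (Xd u) p * pdy ξ p) + 2 * Td (Yd u) p * ξ p) = 0
      rw [hXξ0 p hpO, hYξ0 p hpO, hyξ0 p hpO, hξ0 p hpO]; ring
    · intro p hp
      obtain ⟨b0, b1, b2, b3, b4, b5, b6, b7, b8, b9, b10⟩ := XiS_bnd (hMb p hp)
      refine weight_bound hp.2 (G0_nonneg u p) ?_
      show |(-(Xd (Xd u) p * Xd ξ p + Yd (Xd u) p * Yd ξ p + pdy (Xd u) p * pdy ξ p)
        + 2 * Td (Yd u) p * ξ p)| ≤ 5 * M * G0 u p
      exact bnd_Rint (bnd_XXu u p) (bnd_YXu u p) (bnd_yXu u p) (bnd_TYu u p)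
        b1 b2 b4 b0 (G0_nonneg u p) hM0
  have hg1 : IntegrableOn (fun p : Pt => p.2 ^ a * Xd (fun q => gradInner u ξ q) p)
      Hplus volume := by
    refine integrableOn_of_dom (C := 6 * M) hDom ?_ ?_ ?_
    · exact (contOn_ya.mul (contOn_Xd cdA)).aestronglyMeasurable measurableSet_Hplus
    · intro p hp hnb
      rw [vanish_Xd hO hA0 (hmemO p hnb), mul_zero]
    · intro p hp
      obtain ⟨b0, b1, b2, b3, b4, b5, b6, b7, b8, b9, b10⟩ := XiS_bnd (hMb p hp)
      have hu2 := hu_at p hp.2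
      refine weight_bound hp.2 (G0_nonneg u p) ?_
      have hexp := Xd_gradInner hu2 (hξ_at p)
      rw [comm_Xy hu2] at hexp
      rw [hexp]
      exact sum6_bound (bnd_XXu u p) (bnd_Xu u p) (bnd_XYu u p) (bnd_Yu u p)
        (bnd_yXu u p) (bnd_yu u p) b1 b5 b2 b6 b4 b7 (G0_nonneg u p) hM0
  have hg2 : IntegrableOn (fun p : Pt => p.2 ^ a * Yd (fun q => Td u q * ξ q) p)
      Hplus volume := by
    refine integrableOn_of_dom (C := (1 + 2) * M) hDom ?_ ?_ ?_
    · exact (contOn_ya.mul (contOn_Yd cdB)).aestronglyMeasurable measurableSet_Hplus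
    · intro p hp hnb
      rw [vanish_Yd hO hB0 (hmemO p hnb), mul_zero]
    · intro p hp
      obtain ⟨b0, b1, b2, b3, b4, b5, b6, b7, b8, b9, b10⟩ := XiS_bnd (hMb p hp)
      have hu2 := hu_at p hp.2
      refine weight_bound hp.2 (G0_nonneg u p) ?_
      have hexp : Yd (fun q => Td u q * ξ q) p = Td (Yd u) p * ξ p + Td u p * Yd ξ p := by
        rw [Yd_mul (diff_Td hu2) (hdξ p), comm_YT hu2]
      rw [hexp]
      exact bnd_two (bnd_TYu u p) (bnd_Tu hu2) b0 b2 (G0_nonneg u p) hM0 (by norm_num)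
  have hg3 : IntegrableOn (fun p : Pt => p.2 ^ a * Td (fun q => Yd u q * ξ q) p)
      Hplus volume := by
    refine integrableOn_of_dom (C := (1 + 1) * M) hDom ?_ ?_ ?_
    · exact (contOn_ya.mul (contOn_Td cdC)).aestronglyMeasurable measurableSet_Hplus
    · intro p hp hnb
      rw [vanish_Td hO hC0 (hmemO p hnb), mul_zero]
    · intro p hp
      obtain ⟨b0, b1, b2, b3, b4, b5, b6, b7, b8, b9, b10⟩ := XiS_bnd (hMb p hp)
      have hu2 := hu_at p hp.2
      refine weight_bound hp.2 (G0_nonneg u p) ?_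
      have hexp : Td (fun q => Yd u q * ξ q) p = Td (Yd u) p * ξ p + Yd u p * Td ξ p :=
        Td_mul (diff_Yd hu2) (hdξ p)
      rw [hexp]
      exact bnd_two (bnd_TYu u p) (by rw [one_mul]; exact bnd_Yu u p) b0 b3
        (G0_nonneg u p) hM0 (by norm_num)
  have hRi' : IntegrableOn
      (fun p : Pt => p.2 ^ a * (-(gradInner (Yd u) ξ p) - 2 * Td (Xd u) p * ξ p))
      Hplus volume := by
    refine integrableOn_of_dom (C := 5 * M) hDom ?_ ?_ ?_
    · refine ContinuousOn.aestronglyMeasurable ?_ measurableSet_Hplus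
      refine ContinuousOn.mul contOn_ya (ContinuousOn.sub (ContinuousOn.neg ?_) ?_)
      · show ContinuousOn
          (fun p => Xd (Yd u) p * Xd ξ p + Yd (Yd u) p * Yd ξ p
            + pdy (Yd u) p * pdy ξ p) Hplus
        exact ((coXYu.mul coXξg.continuousOn).add (coYYu.mul coYξg.continuousOn)).add
          (coyYu.mul coyξg.continuousOn)
      · exact (continuousOn_const.mul coTXu).mul coξ.continuousOn
    · intro p hp hnb
      have hpO := hmemO p hnb
      show p.2 ^ a * (-(Xd (Yd u) p * Xd ξ p + Yd (Yd u) p * Yd ξ p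
        + pdy (Yd u) p * pdy ξ p) - 2 * Td (Xd u) p * ξ p) = 0
      rw [hXξ0 p hpO, hYξ0 p hpO, hyξ0 p hpO, hξ0 p hpO]; ring
    · intro p hp
      obtain ⟨b0, b1, b2, b3, b4, b5, b6, b7, b8, b9, b10⟩ := XiS_bnd (hMb p hp)
      refine weight_bound hp.2 (G0_nonneg u p) ?_
      show |(-(Xd (Yd u) p * Xd ξ p + Yd (Yd u) p * Yd ξ p + pdy (Yd u) p * pdy ξ p)
        - 2 * Td (Xd u) p * ξ p)| ≤ 5 * M * G0 u p
      have : -(Xd (Yd u) p * Xd ξ p + Yd (Yd u) p * Yd ξ p + pdy (Yd u) p * pdy ξ p)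
          - 2 * Td (Xd u) p * ξ p
          = -(Xd (Yd u) p * Xd ξ p + Yd (Yd u) p * Yd ξ p + pdy (Yd u) p * pdy ξ p)
            + 2 * (-(Td (Xd u) p)) * ξ p := by ring
      rw [this]
      refine bnd_Rint (bnd_XYu u p) (bnd_YYu u p) (bnd_yYu u p) ?_
        b1 b2 b4 b0 (G0_nonneg u p) hM0
      rw [abs_neg]; exact bnd_TXu u p
  have hg1' : IntegrableOn (fun p : Pt => p.2 ^ a * Yd (fun q => gradInner u ξ q) p)
      Hplus volume := by
    refine integrableOn_of_dom (C := 6 * M) hDom ?_ ?_ ?_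
    · exact (contOn_ya.mul (contOn_Yd cdA)).aestronglyMeasurable measurableSet_Hplus
    · intro p hp hnb
      rw [vanish_Yd hO hA0 (hmemO p hnb), mul_zero]
    · intro p hp
      obtain ⟨b0, b1, b2, b3, b4, b5, b6, b7, b8, b9, b10⟩ := XiS_bnd (hMb p hp)
      have hu2 := hu_at p hp.2
      refine weight_bound hp.2 (G0_nonneg u p) ?_
      have hexp := Yd_gradInner hu2 (hξ_at p)
      rw [comm_Yy hu2] at hexp
      rw [hexp]
      exact sum6_bound (bnd_YXu u p) (bnd_Xu u p) (bnd_YYu u p) (bnd_Yu u p)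
        (bnd_yYu u p) (bnd_yu u p) b1 b8 b2 b9 b4 b10 (G0_nonneg u p) hM0
  have hg2' : IntegrableOn (fun p : Pt => p.2 ^ a * Xd (fun q => Td u q * ξ q) p)
      Hplus volume := by
    refine integrableOn_of_dom (C := (1 + 2) * M) hDom ?_ ?_ ?_
    · exact (contOn_ya.mul (contOn_Xd cdB)).aestronglyMeasurable measurableSet_Hplus
    · intro p hp hnb
      rw [vanish_Xd hO hB0 (hmemO p hnb), mul_zero]
    · intro p hp
      obtain ⟨b0, b1, b2, b3, b4, b5, b6, b7, b8, b9, b10⟩ := XiS_bnd (hMb p hp)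
      have hu2 := hu_at p hp.2
      refine weight_bound hp.2 (G0_nonneg u p) ?_
      have hexp : Xd (fun q => Td u q * ξ q) p = Td (Xd u) p * ξ p + Td u p * Xd ξ p := by
        rw [Xd_mul (diff_Td hu2) (hdξ p), comm_XT hu2]
      rw [hexp]
      exact bnd_two (bnd_TXu u p) (bnd_Tu hu2) b0 b1 (G0_nonneg u p) hM0 (by norm_num)
  have hg3' : IntegrableOn (fun p : Pt => p.2 ^ a * Td (fun q => Xd u q * ξ q) p)
      Hplus volume := by
    refine integrableOn_of_dom (C := (1 + 1) * M) hDom ?_ ?_ ?_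
    · exact (contOn_ya.mul (contOn_Td cdC2)).aestronglyMeasurable measurableSet_Hplus
    · intro p hp hnb
      rw [vanish_Td hO hC20 (hmemO p hnb), mul_zero]
    · intro p hp
      obtain ⟨b0, b1, b2, b3, b4, b5, b6, b7, b8, b9, b10⟩ := XiS_bnd (hMb p hp)
      have hu2 := hu_at p hp.2
      refine weight_bound hp.2 (G0_nonneg u p) ?_
      have hexp : Td (fun q => Xd u q * ξ q) p = Td (Xd u) p * ξ p + Xd u p * Td ξ p :=
        Td_mul (diff_Xd hu2) (hdξ p)
      rw [hexp]
      exact bnd_two (bnd_TXu u p) (by rw [one_mul]; exact bnd_Xu u p) b0 b3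
        (G0_nonneg u p) hM0 (by norm_num)
  -- the IBP identities
  have key1 : (∫ p in Hplus, p.2 ^ a * Xd (fun q => gradInner u ξ q) p) = 0 :=
    ibpX a _ cdA R' hR' hAsupp hg1
  have key2 : (∫ p in Hplus, p.2 ^ a * Yd (fun q => Td u q * ξ q) p) = 0 :=
    ibpY a _ cdB R' hR' hBsupp hg2
  have key3 : (∫ p in Hplus, p.2 ^ a * Td (fun q => Yd u q * ξ q) p) = 0 :=
    ibpT a _ cdC R' hR' hCsupp hg3
  have key1' : (∫ p in Hplus, p.2 ^ a * Yd (fun q => gradInner u ξ q) p) = 0 :=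
    ibpY a _ cdA R' hR' hAsupp hg1'
  have key2' : (∫ p in Hplus, p.2 ^ a * Xd (fun q => Td u q * ξ q) p) = 0 :=
    ibpX a _ cdB R' hR' hBsupp hg2'
  have key3' : (∫ p in Hplus, p.2 ^ a * Td (fun q => Xd u q * ξ q) p) = 0 :=
    ibpT a _ cdC2 R' hR' hC2supp hg3'
  constructor
  · have hEq : Set.EqOn (fun p : Pt => p.2 ^ a * gradInner u (Xd ξ) p)
        (fun p : Pt => (p.2 ^ a * (-(gradInner (Xd u) ξ p) + 2 * Td (Yd u) p * ξ p))
          + ((p.2 ^ a * Xd (fun q => gradInner u ξ q) p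
            - p.2 ^ a * Yd (fun q => Td u q * ξ q) p)
            - p.2 ^ a * Td (fun q => Yd u q * ξ q) p)) Hplus := by
      intro p hp
      have h := grand_X (hu_at p hp) (hξ_at p)
      show p.2 ^ a * gradInner u (Xd ξ) p = _
      linear_combination (p.2 ^ a) * h
    have hd1 : IntegrableOn (fun p : Pt => p.2 ^ a * Xd (fun q => gradInner u ξ q) p
        - p.2 ^ a * Yd (fun q => Td u q * ξ q) p) Hplus volume := hg1.sub hg2
    have hd2 : IntegrableOn (fun p : Pt => (p.2 ^ a * Xd (fun q => gradInner u ξ q) p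
        - p.2 ^ a * Yd (fun q => Td u q * ξ q) p)
        - p.2 ^ a * Td (fun q => Yd u q * ξ q) p) Hplus volume := hd1.sub hg3
    rw [setIntegral_congr_fun measurableSet_Hplus hEq,
      integral_add hRi hd2, integral_sub hd1 hg3, integral_sub hg1 hg2,
      key1, key2, key3]
    ring
  · have hEq : Set.EqOn (fun p : Pt => p.2 ^ a * gradInner u (Yd ξ) p)
        (fun p : Pt => (p.2 ^ a * (-(gradInner (Yd u) ξ p) - 2 * Td (Xd u) p * ξ p))
          + ((p.2 ^ a * Yd (fun q => gradInner u ξ q) p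
            + p.2 ^ a * Xd (fun q => Td u q * ξ q) p)
            + p.2 ^ a * Td (fun q => Xd u q * ξ q) p)) Hplus := by
      intro p hp
      have h := grand_Y (hu_at p hp) (hξ_at p)
      show p.2 ^ a * gradInner u (Yd ξ) p = _
      linear_combination (p.2 ^ a) * h
    have hd1 : IntegrableOn (fun p : Pt => p.2 ^ a * Yd (fun q => gradInner u ξ q) p
        + p.2 ^ a * Xd (fun q => Td u q * ξ q) p) Hplus volume := hg1'.add hg2'
    have hd2 : IntegrableOn (fun p : Pt => (p.2 ^ a * Yd (fun q => gradInner u ξ q) p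
        + p.2 ^ a * Xd (fun q => Td u q * ξ q) p)
        + p.2 ^ a * Td (fun q => Xd u q * ξ q) p) Hplus volume := hd1.add hg3'
    rw [setIntegral_congr_fun measurableSet_Hplus hEq,
      integral_add hRi' hd2, integral_add hd1 hg3', integral_add hg1' hg2',
      key1', key2', key3']
    ring
end identities
end
end
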